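/- arXiv:1008.2608 — 3 statements merged into one kernel-verified Lean document; each statement's English description precedes it below -/
import Mathlib

section
/- Let E be a polyhedral set in ℝⁿ (i.e., a finite union of polyhedra, where a polyhedron is an intersection of finitely many closed halfspaces). Then the following are equivalent: (1) there exist a set Δ that is a finite union of polytopes (convex hulls of finite point sets) and a convex polyhedral cone σ (the set of nonnegative combinations of finitely many vectors) such that E = Δ + σ (Minkowski sum); (2) for every p ∈ E, the local recession cone rec_p(E) = {u ∈ ℝⁿ | p + λu ∈ E for all λ ≥ 0} equals the recession cone rec(E) = ⋂_{q ∈ E} rec_q(E). -/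
open Set Pointwise

variable {E : Type*} [NormedAddCommGroup E] [NormedSpace ℝ E]

/-- A polyhedron: an intersection of finitely many closed halfspaces. -/
def IsPolyhedron (S : Set E) : Prop :=
  ∃ (m : ℕ) (f : Fin m → E →ₗ[ℝ] ℝ) (b : Fin m → ℝ), S = {x | ∀ i, f i x ≤ b i}

/-- A polytope: the convex hull of a (nonempty) finite set of points. -/
def IsPolytope (S : Set E) : Prop :=
  ∃ F : Finset E, F.Nonempty ∧ S = convexHull ℝ (F : Set E)

/-- A convex polyhedral cone: the set of nonnegative combinations of finitely
many vectors. -/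
def IsPolyhedralCone (S : Set E) : Prop :=
  ∃ F : Finset E, S = {x | ∃ c : E → ℝ, (∀ v, 0 ≤ c v) ∧ x = ∑ v ∈ F, c v • v}

/-- The local recession cone of `S` at `p`:
`{u | p + t • u ∈ S for all t ≥ 0}`. -/
def locRec (S : Set E) (p : E) : Set E := {u | ∀ t : ℝ, 0 ≤ t → p + t • u ∈ S}

/-- The recession cone of a set: the intersection of all local recession
cones. -/
def recSet (S : Set E) : Set E := ⋂ p ∈ S, locRec S p

/-- The recession cone of a polyhedron: `{u | S + u ⊆ S}`. -/
def recPoly (S : Set E) : Set E := {u | ∀ x ∈ S, x + u ∈ S}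

/-- `S_x`: the set of points of `S` minimizing the linear functional `x`. -/
def faceSet (S : Set E) (x : E →ₗ[ℝ] ℝ) : Set E := {u ∈ S | ∀ v ∈ S, x u ≤ x v}

/-- A face of `S`: a nonempty subset of the form `S_x`. -/
def IsFaceOf (F S : Set E) : Prop := F.Nonempty ∧ ∃ x : E →ₗ[ℝ] ℝ, F = faceSet S x

/-- A polyhedral complex: a nonempty finite collection of (nonempty) polyhedra,
closed under taking faces, in which any two members that meet intersect in a
common face. -/
def IsPolyComplex (P : Set (Set E)) : Prop :=
  P.Nonempty ∧ P.Finite ∧ (∀ S ∈ P, IsPolyhedron S ∧ S.Nonempty) ∧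
  (∀ S ∈ P, ∀ F : Set E, IsFaceOf F S → F ∈ P) ∧
  ∀ S ∈ P, ∀ T ∈ P, (S ∩ T).Nonempty → IsFaceOf (S ∩ T) S ∧ IsFaceOf (S ∩ T) T

/-- The support of a collection of sets. -/
def polySupport (P : Set (Set E)) : Set E := ⋃ S ∈ P, S

/-- The Minkowski-Weyl condition: every local recession cone equals the global
recession cone. -/
def MWCondition (S : Set E) : Prop := ∀ p ∈ S, locRec S p = recSet S

/-- A conic polyhedral complex: a polyhedral complex all of whose members are
convex polyhedral cones. -/
def IsConicPolyComplex (P : Set (Set E)) : Prop :=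
  IsPolyComplex P ∧ ∀ S ∈ P, IsPolyhedralCone S

/-- Strongly convex: contains no affine line. -/
def StronglyConvexSet (S : Set E) : Prop :=
  ¬ ∃ p d : E, d ≠ 0 ∧ ∀ t : ℝ, p + t • d ∈ S

/-- A fan: a conic polyhedral complex all of whose members are strongly
convex. -/
def IsFan (P : Set (Set E)) : Prop :=
  IsConicPolyComplex P ∧ ∀ S ∈ P, StronglyConvexSet S

/-- The recession of a complex: the collection of recession cones of its
members. -/
def recComplex (P : Set (Set E)) : Set (Set E) := {C | ∃ Λ ∈ P, C = recPoly Λ}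

/-- The cone `c(S)` over a set `S ⊆ E`, inside `E × ℝ`: the closure of
`{t • (u, 1) | u ∈ S, t > 0}`. -/
def coneOver (S : Set E) : Set (E × ℝ) :=
  closure {y | ∃ u ∈ S, ∃ t : ℝ, 0 < t ∧ y = t • (u, (1 : ℝ))}

/-- The open cone `c°(S)` over `S`: `{t • (u, 1) | u ∈ S, t > 0}`. -/
def openCone (S : Set E) : Set (E × ℝ) :=
  {y | ∃ u ∈ S, ∃ t : ℝ, 0 < t ∧ y = t • (u, (1 : ℝ))}

/-- The cone `c(Π)` of a complex: the cones over its members together with the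
recession cones of its members placed at height `0`. -/
def coneComplex (P : Set (Set E)) : Set (Set (E × ℝ)) :=
  {C | ∃ Λ ∈ P, C = coneOver Λ} ∪
  {C | ∃ Λ ∈ P, C = (recPoly Λ) ×ˢ ({0} : Set ℝ)}

/-- `aff` of a conic complex in `E × ℝ`: the nonempty intersections of its
members with the hyperplane `E × {1}`, regarded as subsets of `E`. -/
def affOf (P : Set (Set (E × ℝ))) : Set (Set E) :=
  {L | L.Nonempty ∧ ∃ σ ∈ P, L = {u | (u, (1 : ℝ)) ∈ σ}}

/-- A polyhedral set: a finite union of polyhedra. -/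
def IsPolyhedralSet (S : Set E) : Prop :=
  ∃ (k : ℕ) (f : Fin k → Set E), (∀ i, IsPolyhedron (f i)) ∧ S = ⋃ i, f i

/-- A finite union of polytopes. -/
def IsFiniteUnionOfPolytopes (S : Set E) : Prop :=
  ∃ (k : ℕ) (f : Fin k → Set E), (∀ i, IsPolytope (f i)) ∧ S = ⋃ i, f i

namespace MWaux

def coneInd {ι : Type} [Fintype ι] (g : ι → E) : Set E :=
  {x | ∃ c : ι → ℝ, (∀ i, 0 ≤ c i) ∧ x = ∑ i, c i • g i}

def coneF (F : Finset E) : Set E :=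
  {x | ∃ c : E → ℝ, (∀ v, 0 ≤ c v) ∧ x = ∑ v ∈ F, c v • v}

def convInd {ι : Type} [Fintype ι] (v : ι → E) : Set E :=
  {x | ∃ w : ι → ℝ, (∀ i, 0 ≤ w i) ∧ ∑ i, w i = 1 ∧ x = ∑ i, w i • v i}

theorem coneInd_zero_mem {ι : Type} [Fintype ι] (g : ι → E) : (0 : E) ∈ coneInd g :=
  ⟨0, fun _ => le_refl _, by simp⟩

theorem coneInd_gen_mem {ι : Type} [Fintype ι] (g : ι → E) (i : ι) : g i ∈ coneInd g := by
  classical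
  refine ⟨fun j => if j = i then 1 else 0, fun j => by positivity, ?_⟩
  rw [Finset.sum_congr rfl (fun j _ => ite_smul (j = i) (g j) 1 0)]
  simp

theorem coneInd_add_mem {ι : Type} [Fintype ι] {g : ι → E} {x y : E}
    (hx : x ∈ coneInd g) (hy : y ∈ coneInd g) : x + y ∈ coneInd g := by
  obtain ⟨c, hc, rfl⟩ := hx
  obtain ⟨d, hd, rfl⟩ := hy
  exact ⟨c + d, fun i => add_nonneg (hc i) (hd i), by
    simp [add_smul, Finset.sum_add_distrib]⟩

theorem coneInd_smul_mem {ι : Type} [Fintype ι] {g : ι → E} {x : E} {t : ℝ}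
    (ht : 0 ≤ t) (hx : x ∈ coneInd g) : t • x ∈ coneInd g := by
  obtain ⟨c, hc, rfl⟩ := hx
  exact ⟨fun i => t * c i, fun i => mul_nonneg ht (hc i), by
    simp [Finset.smul_sum, mul_smul]⟩

theorem coneF_zero_mem (F : Finset E) : (0 : E) ∈ coneF F :=
  ⟨0, fun _ => le_refl _, by simp⟩

theorem coneF_gen_mem (F : Finset E) {v : E} (hv : v ∈ F) : v ∈ coneF F := by
  classical
  refine ⟨fun w => if w = v then 1 else 0, fun w => by positivity, ?_⟩
  rw [Finset.sum_congr rfl (fun w _ => ite_smul (w = v) w 1 0)]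
  simp [hv]

theorem coneF_add_mem {F : Finset E} {x y : E}
    (hx : x ∈ coneF F) (hy : y ∈ coneF F) : x + y ∈ coneF F := by
  obtain ⟨c, hc, rfl⟩ := hx
  obtain ⟨d, hd, rfl⟩ := hy
  exact ⟨c + d, fun v => add_nonneg (hc v) (hd v), by
    simp [add_smul, Finset.sum_add_distrib]⟩

theorem coneF_smul_mem {F : Finset E} {x : E} {t : ℝ}
    (ht : 0 ≤ t) (hx : x ∈ coneF F) : t • x ∈ coneF F := by
  obtain ⟨c, hc, rfl⟩ := hx
  exact ⟨fun v => t * c v, fun v => mul_nonneg ht (hc v), by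
    simp [Finset.smul_sum, mul_smul]⟩

theorem coneInd_subset {ι : Type} [Fintype ι] {g : ι → E} {K : Set E} (h0 : (0 : E) ∈ K)
    (hadd : ∀ x ∈ K, ∀ y ∈ K, x + y ∈ K)
    (hsmul : ∀ t : ℝ, 0 ≤ t → ∀ x ∈ K, t • x ∈ K)
    (hgen : ∀ i, g i ∈ K) : coneInd g ⊆ K := by
  rintro x ⟨c, hc, rfl⟩
  have : ∀ s : Finset ι, (∑ i ∈ s, c i • g i) ∈ K := by
    intro s
    induction s using Finset.cons_induction with
    | empty => simpa using h0
    | cons a s ha ih =>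
      rw [Finset.sum_cons]
      exact hadd _ (hsmul _ (hc a) _ (hgen a)) _ ih
  exact this Finset.univ

theorem coneF_subset {F : Finset E} {K : Set E} (h0 : (0 : E) ∈ K)
    (hadd : ∀ x ∈ K, ∀ y ∈ K, x + y ∈ K)
    (hsmul : ∀ t : ℝ, 0 ≤ t → ∀ x ∈ K, t • x ∈ K)
    (hgen : ∀ v ∈ F, v ∈ K) : coneF F ⊆ K := by
  rintro x ⟨c, hc, rfl⟩
  have : ∀ s : Finset E, (∀ v ∈ s, v ∈ K) → (∑ v ∈ s, c v • v) ∈ K := by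
    intro s hs
    induction s using Finset.cons_induction with
    | empty => simpa using h0
    | cons a s ha ih =>
      rw [Finset.sum_cons]
      exact hadd _ (hsmul _ (hc a) _ (hs a (Finset.mem_cons_self a s)))
        _ (ih fun v hv => hs v (Finset.mem_cons_of_mem hv))
  exact this F hgen

theorem coneF_eq_coneInd (F : Finset E) :
    ∃ (g : Fin F.card → E), coneF F = coneInd g := by
  refine ⟨fun i => (F.equivFin.symm i : E), ?_⟩
  apply Set.Subset.antisymm
  · refine coneF_subset (coneInd_zero_mem _) (fun x hx y hy => coneInd_add_mem hx hy)
      (fun t ht x hx => coneInd_smul_mem ht hx) ?_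
    intro v hv
    have : v = ((F.equivFin.symm (F.equivFin ⟨v, hv⟩)) : E) := by simp
    rw [this]
    exact coneInd_gen_mem _ _
  · refine coneInd_subset (coneF_zero_mem _) (fun x hx y hy => coneF_add_mem hx hy)
      (fun t ht x hx => coneF_smul_mem ht hx) ?_
    intro i
    exact coneF_gen_mem F (F.equivFin.symm i).2

theorem coneInd_eq_coneF {ι : Type} [Fintype ι] (g : ι → E) :
    ∃ F : Finset E, coneInd g = coneF F := by
  classical
  refine ⟨Finset.image g Finset.univ, ?_⟩
  apply Set.Subset.antisymm
  · refine coneInd_subset (coneF_zero_mem _) (fun x hx y hy => coneF_add_mem hx hy)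
      (fun t ht x hx => coneF_smul_mem ht hx) ?_
    intro i
    exact coneF_gen_mem _ (Finset.mem_image_of_mem g (Finset.mem_univ i))
  · refine coneF_subset (coneInd_zero_mem _) (fun x hx y hy => coneInd_add_mem hx hy)
      (fun t ht x hx => coneInd_smul_mem ht hx) ?_
    intro v hv
    obtain ⟨i, _, rfl⟩ := Finset.mem_image.mp hv
    exact coneInd_gen_mem _ _

theorem convInd_gen_mem {ι : Type} [Fintype ι] (v : ι → E) (i : ι) : v i ∈ convInd v := by
  classical
  refine ⟨fun j => if j = i then 1 else 0, fun j => by positivity, by simp, ?_⟩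
  rw [Finset.sum_congr rfl (fun j _ => ite_smul (j = i) (v j) 1 0)]
  simp

theorem convInd_convex {ι : Type} [Fintype ι] (v : ι → E) : Convex ℝ (convInd v) := by
  rintro x ⟨w, hw, hw1, rfl⟩ y ⟨w', hw', hw1', rfl⟩ a b ha hb hab
  refine ⟨fun i => a * w i + b * w' i,
    fun i => add_nonneg (mul_nonneg ha (hw i)) (mul_nonneg hb (hw' i)), ?_, ?_⟩
  · rw [Finset.sum_add_distrib, ← Finset.mul_sum, ← Finset.mul_sum, hw1, hw1']
    simpa using hab
  · rw [Finset.smul_sum, Finset.smul_sum, ← Finset.sum_add_distrib]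
    exact (Finset.sum_congr rfl fun i _ => by
      rw [add_smul, mul_smul, mul_smul]).symm

theorem convInd_eq_convexHull {ι : Type} [Fintype ι] (v : ι → E) :
    convInd v = convexHull ℝ (Set.range v) := by
  apply Set.Subset.antisymm
  · rintro x ⟨w, hw, hw1, rfl⟩
    exact Convex.sum_mem (convex_convexHull ℝ _) (fun i _ => hw i) hw1
      (fun i _ => subset_convexHull ℝ _ (Set.mem_range_self i))
  · refine convexHull_min ?_ (convInd_convex v)
    rintro x ⟨i, rfl⟩
    exact convInd_gen_mem v i

theorem coneInd_inter_halfspace {ι : Type} [Fintype ι] (g : ι → E) (f : E →ₗ[ℝ] ℝ) :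
    ∃ (ι' : Type) (_ : Fintype ι') (g' : ι' → E),
      coneInd g ∩ {x | f x ≤ 0} = coneInd g' := by
  classical
  set F : ι → ℝ := fun i => f (g i) with hF
  refine ⟨ι ⊕ ι × ι, inferInstance,
    Sum.elim (fun i => if F i ≤ 0 then g i else 0)
      (fun p => if 0 < F p.1 ∧ F p.2 < 0 then (-(F p.2)) • g p.1 + (F p.1) • g p.2 else 0), ?_⟩
  set g' : ι ⊕ ι × ι → E := Sum.elim (fun i => if F i ≤ 0 then g i else 0)
      (fun p => if 0 < F p.1 ∧ F p.2 < 0 then (-(F p.2)) • g p.1 + (F p.1) • g p.2 else 0)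
    with hg'
  apply Set.Subset.antisymm
  · -- hard direction
    rintro x ⟨⟨μ, hμ, rfl⟩, hfx⟩
    simp only [Set.mem_setOf_eq] at hfx
    have hfx' : ∑ i, μ i * F i ≤ 0 := by
      have : f (∑ i, μ i • g i) = ∑ i, μ i * F i := by
        rw [map_sum]; exact Finset.sum_congr rfl fun i _ => by
          rw [map_smul, smul_eq_mul]
      rwa [this] at hfx
    set N : ℝ := ∑ j, (if F j < 0 then μ j * (-F j) else 0) with hNdef
    set P : ℝ := ∑ i, (if 0 < F i then μ i * F i else 0) with hPdef
    have hN : 0 ≤ N := Finset.sum_nonneg fun j _ => by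
      split_ifs with h
      · exact mul_nonneg (hμ j) (by linarith)
      · exact le_refl _
    have hP : 0 ≤ P := Finset.sum_nonneg fun i _ => by
      split_ifs with h
      · exact mul_nonneg (hμ i) h.le
      · exact le_refl _
    have hsplit : ∑ i, μ i * F i = P - N := by
      rw [hPdef, hNdef, ← Finset.sum_sub_distrib]
      refine Finset.sum_congr rfl fun i _ => ?_
      rcases lt_trichotomy (F i) 0 with h | h | h
      · rw [if_neg (by linarith), if_pos h]; ring
      · rw [if_neg (by simp [h]), if_neg (by simp [h])]; rw [h]; ring
      · rw [if_pos h, if_neg (by linarith)]; ring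
    have hPN : P ≤ N := by linarith
    have hμzero : N = 0 → ∀ i, 0 < F i → μ i = 0 := by
      intro h i hFi
      have hP0 : P = 0 := le_antisymm (h ▸ hPN) hP
      have := (Finset.sum_eq_zero_iff_of_nonneg (fun i _ => by
        split_ifs with h'
        · exact mul_nonneg (hμ i) h'.le
        · exact le_refl _)).mp hP0.symm.symm i (Finset.mem_univ i)
      rw [if_pos hFi] at this
      exact (mul_eq_zero.mp this).resolve_right (ne_of_gt hFi)
    have hPNle1 : P / N ≤ 1 := by
      rcases eq_or_lt_of_le hN with h | h
      · rw [← h, div_zero]; norm_num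
      · exact (div_le_one h).mpr hPN
    set c : ι ⊕ ι × ι → ℝ := Sum.elim
      (fun i => if 0 < F i then 0 else if F i < 0 then μ i * (1 - P / N) else μ i)
      (fun p => if 0 < F p.1 ∧ F p.2 < 0 then μ p.1 * μ p.2 / N else 0) with hc
    refine ⟨c, ?_, ?_⟩
    · rintro (i | ⟨i, j⟩)
      · simp only [hc, Sum.elim_inl]
        split_ifs with h1 h2
        · exact le_refl _
        · exact mul_nonneg (hμ i) (by linarith)
        · exact hμ i
      · simp only [hc, Sum.elim_inr]
        split_ifs with h1
        · exact div_nonneg (mul_nonneg (hμ i) (hμ j)) hN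
        · exact le_refl _
    · -- the sum identity
      set A : ι → ι → ℝ := fun i j => if 0 < F i ∧ F j < 0 then μ i * μ j / N * (-F j) else 0
        with hA
      set B : ι → ι → ℝ := fun i j => if 0 < F i ∧ F j < 0 then μ i * μ j / N * F i else 0
        with hB
      have hterm : ∀ p : ι × ι, c (Sum.inr p) • g' (Sum.inr p)
          = A p.1 p.2 • g p.1 + B p.1 p.2 • g p.2 := by
        rintro ⟨i, j⟩
        simp only [hc, hg', Sum.elim_inr, hA, hB]
        split_ifs with h
        · rw [smul_add, smul_smul, smul_smul]
        · simp
      have hAsum : ∀ i, (∑ j, A i j) = if 0 < F i then μ i * (N / N) else 0 := by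
        intro i
        by_cases h : 0 < F i
        · rw [if_pos h]
          have : ∀ j, A i j = (μ i / N) * (if F j < 0 then μ j * (-F j) else 0) := by
            intro j
            simp only [hA, h, true_and]
            split_ifs with h'
            · ring
            · ring
          rw [Finset.sum_congr rfl fun j _ => this j, ← Finset.mul_sum, ← hNdef]
          ring
        · rw [if_neg h]
          exact Finset.sum_eq_zero fun j _ => by simp [hA, h]
      have hBsum : ∀ j, (∑ i, B i j) = if F j < 0 then μ j * (P / N) else 0 := by
        intro j
        by_cases h : F j < 0
        · rw [if_pos h]
          have : ∀ i, B i j = (μ j / N) * (if 0 < F i then μ i * F i else 0) := by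
            intro i
            simp only [hB, h, and_true]
            split_ifs with h'
            · ring
            · ring
          rw [Finset.sum_congr rfl fun i _ => this i, ← Finset.mul_sum, ← hPdef]
          ring
        · rw [if_neg h]
          exact Finset.sum_eq_zero fun i _ => by simp [hB, h]
      have hgamma : ∀ i, c (Sum.inl i) • g' (Sum.inl i)
          = (if 0 < F i then 0 else if F i < 0 then μ i * (1 - P / N) else μ i) • g i := by
        intro i
        simp only [hc, hg', Sum.elim_inl]
        split_ifs <;> first | rfl | (exfalso; linarith) | simp
      calc ∑ i, μ i • g i
          = ∑ i, ((if 0 < F i then 0 else if F i < 0 then μ i * (1 - P / N) else μ i)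
            + ((if 0 < F i then μ i * (N / N) else 0)
            + (if F i < 0 then μ i * (P / N) else 0))) • g i := by
            refine Finset.sum_congr rfl fun i _ => ?_
            congr 1
            split_ifs with h1 h2
            · linarith
            · rcases eq_or_lt_of_le hN with hN0 | hN0
              · rw [hμzero hN0.symm i h1, ← hN0]; norm_num
              · rw [div_self (ne_of_gt hN0)]; ring
            · ring
            · ring
        _ = ∑ i, c (Sum.inl i) • g' (Sum.inl i) + (∑ i, (∑ j, A i j) • g i
              + ∑ j, (∑ i, B i j) • g j) := by
            simp only [add_smul, Finset.sum_add_distrib]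
            congr 1
            · exact Finset.sum_congr rfl fun i _ => (hgamma i).symm
            · congr 1
              · exact Finset.sum_congr rfl fun i _ => by rw [hAsum i]
              · exact Finset.sum_congr rfl fun j _ => by rw [hBsum j]
        _ = ∑ i, c (Sum.inl i) • g' (Sum.inl i)
              + ∑ p : ι × ι, c (Sum.inr p) • g' (Sum.inr p) := by
            congr 1
            rw [Finset.sum_congr rfl fun p _ => hterm p]
            simp only [Fintype.sum_prod_type, Finset.sum_add_distrib, Finset.sum_smul]
            congr 1
            exact Finset.sum_comm
        _ = ∑ s : ι ⊕ ι × ι, c s • g' s := (Fintype.sum_sum_type (fun s : ι ⊕ ι × ι => c s • g' s)).symm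
  · -- easy direction
    refine coneInd_subset ?_ ?_ ?_ ?_
    · exact ⟨coneInd_zero_mem g, by simp⟩
    · rintro x ⟨hx1, hx2⟩ y ⟨hy1, hy2⟩
      exact ⟨coneInd_add_mem hx1 hy1, by
        simp only [Set.mem_setOf_eq, map_add] at *; linarith⟩
    · rintro t ht x ⟨hx1, hx2⟩
      exact ⟨coneInd_smul_mem ht hx1, by
        simp only [Set.mem_setOf_eq, map_smul, smul_eq_mul] at *
        exact mul_nonpos_of_nonneg_of_nonpos ht hx2⟩
    · rintro (i | ⟨i, j⟩)
      · simp only [hg', Sum.elim_inl]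
        split_ifs with h
        · exact ⟨coneInd_gen_mem g i, h⟩
        · exact ⟨coneInd_zero_mem g, by simp⟩
      · simp only [hg', Sum.elim_inr]
        split_ifs with h
        · refine ⟨coneInd_add_mem (coneInd_smul_mem (by linarith [h.2]) (coneInd_gen_mem g i))
            (coneInd_smul_mem (le_of_lt h.1) (coneInd_gen_mem g j)), ?_⟩
          simp only [Set.mem_setOf_eq, map_add, map_smul, smul_eq_mul]
          have := h.1; have := h.2
          simp only [hF]; ring_nf
          nlinarith [h.1, h.2]
        · exact ⟨coneInd_zero_mem g, by simp⟩

theorem univ_eq_coneInd [FiniteDimensional ℝ E] :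
    ∃ (ι : Type) (_ : Fintype ι) (g : ι → E), (Set.univ : Set E) = coneInd g := by
  classical
  set d := Module.finrank ℝ E with hd
  set bb := Module.finBasis ℝ E with hbb
  refine ⟨Fin d ⊕ Fin d, inferInstance, Sum.elim (fun i => bb i) (fun i => -(bb i)), ?_⟩
  apply Set.eq_of_subset_of_subset ?_ (Set.subset_univ _)
  intro x _
  refine ⟨Sum.elim (fun i => max (bb.repr x i) 0) (fun i => max (-(bb.repr x i)) 0),
    ?_, ?_⟩
  · rintro (i | i) <;> simp [le_max_right]
  · rw [Fintype.sum_sum_type]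
    simp only [Sum.elim_inl, Sum.elim_inr, smul_neg]
    rw [Finset.sum_neg_distrib, ← sub_eq_add_neg, ← Finset.sum_sub_distrib]
    have : ∀ i : Fin d, max (bb.repr x i) 0 • bb i - max (-(bb.repr x i)) 0 • bb i
        = (bb.repr x i) • bb i := by
      intro i
      rw [← sub_smul]
      congr 1
      rcases le_total 0 (bb.repr x i) with h | h
      · rw [max_eq_left h, max_eq_right (by linarith)]; ring
      · rw [max_eq_right h, max_eq_left (by linarith)]; ring
    rw [Finset.sum_congr rfl fun i _ => this i, Module.Basis.sum_repr]

theorem hcone_eq_coneInd [FiniteDimensional ℝ E] (m : ℕ) (f : Fin m → E →ₗ[ℝ] ℝ) :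
    ∃ (ι : Type) (_ : Fintype ι) (g : ι → E), {x | ∀ i, f i x ≤ 0} = coneInd g := by
  induction m with
  | zero =>
    obtain ⟨ι, _, g, hg⟩ := univ_eq_coneInd (E := E)
    exact ⟨ι, ‹_›, g, by rw [← hg]; exact Set.eq_univ_of_forall fun x i => i.elim0⟩
  | succ m ih =>
    obtain ⟨ι, _, g, hg⟩ := ih (fun i => f i.castSucc)
    obtain ⟨ι', _, g', hg'⟩ := coneInd_inter_halfspace g (f (Fin.last m))
    refine ⟨ι', ‹_›, g', ?_⟩
    rw [← hg', ← hg]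
    ext x
    constructor
    · exact fun h => ⟨fun i => h i.castSucc, h (Fin.last m)⟩
    · rintro ⟨h1, h2⟩ i
      exact Fin.lastCases h2 h1 i

theorem mw_polyhedron [FiniteDimensional ℝ E] (m : ℕ) (f : Fin m → E →ₗ[ℝ] ℝ) (b : Fin m → ℝ)
    (hne : {x : E | ∀ i, f i x ≤ b i}.Nonempty) :
    ∃ (ι : Type) (_ : Fintype ι) (_ : Nonempty ι) (v : ι → E)
      (κ : Type) (_ : Fintype κ) (r : κ → E),
      {x : E | ∀ i, f i x ≤ b i} = convInd v + coneInd r := by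
  classical
  set P : Set E := {x : E | ∀ i, f i x ≤ b i} with hP
  set f' : Fin (m + 1) → (E × ℝ) →ₗ[ℝ] ℝ := fun i =>
    Fin.lastCases (-(LinearMap.snd ℝ E ℝ))
      (fun j => (f j).comp (LinearMap.fst ℝ E ℝ) - b j • (LinearMap.snd ℝ E ℝ)) i with hf'
  set C : Set (E × ℝ) := {y | ∀ i, f' i y ≤ 0} with hCdef
  have hmemC : ∀ y : E × ℝ, y ∈ C ↔ (∀ j, f j y.1 ≤ b j * y.2) ∧ 0 ≤ y.2 := by
    intro y
    constructor
    · intro h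
      refine ⟨fun j => ?_, ?_⟩
      · have := h j.castSucc
        simp only [hf', Fin.lastCases_castSucc, LinearMap.sub_apply, LinearMap.comp_apply,
          LinearMap.fst_apply, LinearMap.smul_apply, LinearMap.snd_apply, smul_eq_mul] at this
        linarith
      · have := h (Fin.last m)
        simp only [hf', Fin.lastCases_last, LinearMap.neg_apply, LinearMap.snd_apply] at this
        linarith
    · rintro ⟨h1, h2⟩ i
      refine Fin.lastCases ?_ (fun j => ?_) i
      · simp only [hf', Fin.lastCases_last, LinearMap.neg_apply, LinearMap.snd_apply]
        linarith
      · simp only [hf', Fin.lastCases_castSucc, LinearMap.sub_apply, LinearMap.comp_apply,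
          LinearMap.fst_apply, LinearMap.smul_apply, LinearMap.snd_apply, smul_eq_mul]
        linarith [h1 j]
  have hx1 : ∀ x : E, ((x, (1:ℝ)) : E × ℝ) ∈ C ↔ x ∈ P := by
    intro x
    rw [hmemC]
    simp [hP]
  obtain ⟨ι, _, gg, hC⟩ := hcone_eq_coneInd (m + 1) f'
  rw [← hCdef] at hC
  set τ : ι → ℝ := fun l => (gg l).2 with hτdef
  have hτ : ∀ l, 0 ≤ τ l := by
    intro l
    have hginC : gg l ∈ C := hC ▸ coneInd_gen_mem gg l
    exact ((hmemC (gg l)).mp hginC).2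
  obtain ⟨p₀, hp₀⟩ := hne
  have hp₀C : ((p₀, (1:ℝ)) : E × ℝ) ∈ C := (hx1 p₀).mpr hp₀
  obtain ⟨c₀, hc₀, hsum₀⟩ := hC ▸ hp₀C
  have hι : Nonempty ι := by
    by_contra h
    rw [not_nonempty_iff] at h
    rw [Finset.univ_eq_empty, Finset.sum_empty] at hsum₀
    exact one_ne_zero (congrArg Prod.snd hsum₀)
  set v : ι → E := fun l => if 0 < τ l then (τ l)⁻¹ • (gg l).1 else p₀ with hv
  set r : ι → E := fun l => if τ l = 0 then (gg l).1 else 0 with hr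
  have hPconv : Convex ℝ P := by
    intro x hx y hy a bcoef ha hb hab
    intro i
    have : f i (a • x + bcoef • y) = a * f i x + bcoef * f i y := by
      rw [map_add, map_smul, map_smul, smul_eq_mul, smul_eq_mul]
    rw [this]
    calc a * f i x + bcoef * f i y ≤ a * b i + bcoef * b i :=
          add_le_add (mul_le_mul_of_nonneg_left (hx i) ha)
            (mul_le_mul_of_nonneg_left (hy i) hb)
      _ = b i := by rw [← add_mul, hab, one_mul]
  have hvP : ∀ l, v l ∈ P := by
    intro l
    simp only [hv]
    split_ifs with h
    · have h1 : (τ l)⁻¹ • gg l ∈ C := hC ▸ coneInd_smul_mem (inv_nonneg.mpr h.le)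
        (coneInd_gen_mem gg l)
      have h2 : (τ l)⁻¹ • gg l = (((τ l)⁻¹ • (gg l).1, (1:ℝ)) : E × ℝ) := by
        ext
        · rfl
        · show (τ l)⁻¹ • (gg l).2 = 1
          rw [smul_eq_mul, inv_mul_cancel₀ (ne_of_gt h)]
      rw [h2] at h1
      exact (hx1 _).mp h1
    · exact hp₀
  have hrRec : ∀ l, ((r l, (0:ℝ)) : E × ℝ) ∈ C := by
    intro l
    simp only [hr]
    split_ifs with h
    · have : (((gg l).1, (0:ℝ)) : E × ℝ) = gg l := by
        ext
        · rfl
        · exact h.symm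
      rw [this]
      exact hC ▸ coneInd_gen_mem gg l
    · have : (((0:E), (0:ℝ)) : E × ℝ) = 0 := rfl
      rw [this]
      exact hC ▸ coneInd_zero_mem gg
  have hCadd : ∀ y ∈ C, ∀ z ∈ C, y + z ∈ C := by
    intro y hy z hz
    rw [hC] at *
    exact coneInd_add_mem hy hz
  refine ⟨ι, ‹_›, hι, v, ι, ‹_›, r, ?_⟩
  apply Set.Subset.antisymm
  · -- P ⊆ convInd v + coneInd r
    intro x hx
    have hxC : ((x, (1:ℝ)) : E × ℝ) ∈ C := (hx1 x).mpr hx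
    obtain ⟨c, hc, hsum⟩ := hC ▸ hxC
    have comp1 : x = ∑ l, c l • (gg l).1 := by
      have := congrArg Prod.fst hsum
      rw [Prod.fst_sum] at this
      simpa using this
    have comp2 : (1:ℝ) = ∑ l, c l * τ l := by
      have := congrArg Prod.snd hsum
      rw [Prod.snd_sum] at this
      simpa [hτdef, smul_eq_mul] using this
    set w : ι → ℝ := fun l => if 0 < τ l then c l * τ l else 0 with hw
    set ρ : ι → ℝ := fun l => if τ l = 0 then c l else 0 with hρ
    rw [Set.mem_add]
    refine ⟨∑ l, w l • v l, ⟨w, ?_, ?_, rfl⟩, ∑ l, ρ l • r l, ⟨ρ, ?_, rfl⟩, ?_⟩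
    · intro l
      simp only [hw]
      split_ifs with h
      · exact mul_nonneg (hc l) h.le
      · exact le_refl _
    · rw [comp2]
      refine Finset.sum_congr rfl fun l _ => ?_
      simp only [hw]
      split_ifs with h
      · rfl
      · rw [le_antisymm (not_lt.mp h) (hτ l), mul_zero]
    · intro l
      simp only [hρ]
      split_ifs with h
      · exact hc l
      · exact le_refl _
    · rw [← Finset.sum_add_distrib, comp1]
      refine (Finset.sum_congr rfl fun l _ => ?_).symm
      simp only [hw, hρ, hv, hr]
      by_cases h : 0 < τ l
      · rw [if_pos h, if_pos h, if_neg (ne_of_gt h), zero_smul, add_zero, smul_smul,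
          mul_assoc, mul_inv_cancel₀ (ne_of_gt h), mul_one]
      · have h0 : τ l = 0 := le_antisymm (not_lt.mp h) (hτ l)
        rw [if_neg h, if_neg h, if_pos h0, if_pos h0, zero_smul, zero_add]
  · -- convInd v + coneInd r ⊆ P
    intro x hx
    rw [Set.mem_add] at hx
    obtain ⟨dd, hd, s, hs, rfl⟩ := hx
    have hdP : dd ∈ P := by
      obtain ⟨w, hw, hw1, rfl⟩ := hd
      exact Convex.sum_mem hPconv (fun i _ => hw i) hw1 (fun i _ => hvP i)
    have hsC : ((s, (0:ℝ)) : E × ℝ) ∈ C := by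
      refine coneInd_subset (g := r) (K := {s : E | ((s, (0:ℝ)) : E × ℝ) ∈ C}) ?_ ?_ ?_ ?_ hs
      · show (((0:E), (0:ℝ)) : E × ℝ) ∈ C
        have : (((0:E), (0:ℝ)) : E × ℝ) = 0 := rfl
        rw [this]
        exact hC ▸ coneInd_zero_mem gg
      · intro y hy z hz
        have := hCadd _ hy _ hz
        simpa using this
      · intro t ht y hy
        have := hC ▸ coneInd_smul_mem ht (hC ▸ hy : ((y, (0:ℝ)) : E × ℝ) ∈ coneInd gg)
        have heq : t • ((y, (0:ℝ)) : E × ℝ) = ((t • y, (0:ℝ)) : E × ℝ) := by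
          ext
          · rfl
          · show t • (0:ℝ) = 0
            simp
        rw [heq] at this
        exact hC ▸ this
      · exact hrRec
    have : ((dd + s, (1:ℝ)) : E × ℝ) ∈ C := by
      have h1 : ((dd, (1:ℝ)) : E × ℝ) ∈ C := (hx1 dd).mpr hdP
      have := hCadd _ h1 _ hsC
      simpa using this
    exact (hx1 _).mp this

/-- Cone of combinations supported on a sub-Finset of the index type. -/
def coneIndOn {ι : Type} [Fintype ι] (g : ι → E) (s : Finset ι) : Set E :=
  {x | ∃ c : ι → ℝ, (∀ i ∈ s, 0 ≤ c i) ∧ x = ∑ i ∈ s, c i • g i}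

theorem coneIndOn_univ {ι : Type} [Fintype ι] (g : ι → E) :
    coneIndOn g Finset.univ = coneInd g := by
  ext x
  constructor
  · rintro ⟨c, hc, rfl⟩
    exact ⟨c, fun i => hc i (Finset.mem_univ i), rfl⟩
  · rintro ⟨c, hc, rfl⟩
    exact ⟨c, fun i _ => hc i, rfl⟩

theorem caratheodory_cone {ι : Type} [Fintype ι] (g : ι → E) (s : Finset ι) :
    ∀ x ∈ coneIndOn g s, ∃ t, t ⊆ s ∧
      LinearIndependent ℝ (fun i : t => g (i : ι)) ∧ x ∈ coneIndOn g t := by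
  classical
  induction s using Finset.strongInduction with
  | _ s ih =>
    intro x hx
    by_cases hli : LinearIndependent ℝ (fun i : s => g (i : ι))
    · exact ⟨s, Finset.Subset.refl s, hli, hx⟩
    · obtain ⟨c, hc, rfl⟩ := hx
      obtain ⟨dsub, hdsum, i₀, hi₀⟩ := Fintype.not_linearIndependent_iff.mp hli
      set d : ι → ℝ := fun i => if h : i ∈ s then dsub ⟨i, h⟩ else 0 with hd
      have hdsum' : ∑ i ∈ s, d i • g i = 0 := by
        rw [← Finset.sum_coe_sort s (fun i => d i • g i), ← hdsum]
        refine Finset.sum_congr rfl fun i _ => ?_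
        simp [hd, i.2]
      have hdne : ∃ i ∈ s, d i ≠ 0 := ⟨(i₀ : ι), i₀.2, by simp [hd, i₀.2, hi₀]⟩
      -- get a relation with a positive entry
      obtain ⟨e, hesum, hepos⟩ : ∃ e : ι → ℝ, (∑ i ∈ s, e i • g i = 0) ∧ ∃ i ∈ s, 0 < e i := by
        by_cases hcase : ∃ i ∈ s, 0 < d i
        · exact ⟨d, hdsum', hcase⟩
        · obtain ⟨i, his, hine⟩ := hdne
          push_neg at hcase
          refine ⟨-d, ?_, i, his, ?_⟩
          · have h2 : ∑ i ∈ s, (-d) i • g i = -∑ i ∈ s, d i • g i := by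
              rw [← Finset.sum_neg_distrib]
              exact Finset.sum_congr rfl fun j _ => by simp [neg_smul]
            rw [h2, hdsum', neg_zero]
          · have h1 := hcase i his
            have h3 : d i < 0 := lt_of_le_of_ne h1 hine
            simp only [Pi.neg_apply]
            linarith
      set fs := s.filter (fun i => 0 < e i) with hfs
      have hfsne : fs.Nonempty := by
        obtain ⟨i, his, hie⟩ := hepos
        exact ⟨i, Finset.mem_filter.mpr ⟨his, hie⟩⟩
      obtain ⟨i₁, hi₁mem, hi₁min⟩ := Finset.exists_min_image fs (fun i => c i / e i) hfsne
      have hi₁s : i₁ ∈ s := (Finset.mem_filter.mp hi₁mem).1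
      have hi₁pos : 0 < e i₁ := (Finset.mem_filter.mp hi₁mem).2
      set θ := c i₁ / e i₁ with hθdef
      have hθ : 0 ≤ θ := div_nonneg (hc i₁ hi₁s) hi₁pos.le
      set c' : ι → ℝ := fun i => c i - θ * e i with hc'def
      have hc' : ∀ i ∈ s, 0 ≤ c' i := by
        intro i his
        simp only [hc'def]
        by_cases h : 0 < e i
        · have hmin := hi₁min i (Finset.mem_filter.mpr ⟨his, h⟩)
          have := (le_div_iff₀ h).mp hmin
          linarith
        · have : θ * e i ≤ 0 := mul_nonpos_of_nonneg_of_nonpos hθ (not_lt.mp h)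
          have := hc i his
          linarith
      have hxsum : ∑ i ∈ s, c i • g i = ∑ i ∈ s, c' i • g i := by
        simp only [hc'def, sub_smul, Finset.sum_sub_distrib]
        have : ∑ i ∈ s, (θ * e i) • g i = θ • ∑ i ∈ s, e i • g i := by
          rw [Finset.smul_sum]
          exact Finset.sum_congr rfl fun i _ => by rw [smul_smul]
        rw [this, hesum, smul_zero, sub_zero]
      have hc'i₁ : c' i₁ = 0 := by
        simp only [hc'def, hθdef]
        field_simp
        ring
      have hmem' : (∑ i ∈ s, c i • g i) ∈ coneIndOn g (s.erase i₁) := by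
        refine ⟨c', fun i hi => hc' i (Finset.mem_of_mem_erase hi), ?_⟩
        rw [hxsum, Finset.sum_erase]
        rw [hc'i₁, zero_smul]
      obtain ⟨t, hts, hlit, hmt⟩ := ih (s.erase i₁) (Finset.erase_ssubset hi₁s) _ hmem'
      exact ⟨t, hts.trans (Finset.erase_subset i₁ s), hlit, hmt⟩

theorem coneIndOn_isClosed [FiniteDimensional ℝ E] {ι : Type} [Fintype ι] (g : ι → E)
    (t : Finset ι) (hli : LinearIndependent ℝ (fun i : t => g (i : ι))) :
    IsClosed (coneIndOn g t) := by
  classical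
  set φ : (t → ℝ) →ₗ[ℝ] E :=
    { toFun := fun c => ∑ i : t, c i • g (i : ι)
      map_add' := by intros; simp [add_smul, Finset.sum_add_distrib]
      map_smul' := by intros; simp [smul_smul, Finset.smul_sum] } with hφ
  have hker : LinearMap.ker φ = ⊥ := by
    rw [LinearMap.ker_eq_bot']
    intro c hc
    have := Fintype.linearIndependent_iff.mp hli c hc
    funext i
    exact this i
  have himg : coneIndOn g t = φ '' {c : t → ℝ | ∀ i, 0 ≤ c i} := by
    ext x
    constructor
    · rintro ⟨c, hc, rfl⟩
      refine ⟨fun i => c i, fun i => hc i i.2, ?_⟩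
      show ∑ i : t, c (i : ι) • g (i : ι) = _
      rw [Finset.sum_coe_sort t (fun i => c i • g i)]
    · rintro ⟨c, hc, rfl⟩
      refine ⟨fun i => if h : i ∈ t then c ⟨i, h⟩ else 0, fun i hi => by simp [hi, hc ⟨i, hi⟩], ?_⟩
      show _ = ∑ i ∈ t, (if h : i ∈ t then c ⟨i, h⟩ else 0) • g i
      rw [← Finset.sum_coe_sort t (fun i => (if h : i ∈ t then c ⟨i, h⟩ else 0) • g i)]
      exact (Finset.sum_congr rfl fun i _ => by simp [i.2]).symm
  rw [himg]
  have hclosed : IsClosed {c : t → ℝ | ∀ i, 0 ≤ c i} := by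
    have : {c : t → ℝ | ∀ i, 0 ≤ c i} = ⋂ i, {c : t → ℝ | 0 ≤ c i} := by
      ext c; simp
    rw [this]
    exact isClosed_iInter fun i => isClosed_le continuous_const (continuous_apply i)
  exact (LinearMap.isClosedEmbedding_of_injective hker).isClosedMap _ hclosed

theorem coneInd_isClosed [FiniteDimensional ℝ E] {ι : Type} [Fintype ι] (g : ι → E) :
    IsClosed (coneInd g) := by
  classical
  have hdecomp : coneInd g = ⋃ (t : Finset ι),
      ⋃ (_ : LinearIndependent ℝ (fun i : t => g (i : ι))), coneIndOn g t := by
    apply Set.Subset.antisymm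
    · intro x hx
      rw [← coneIndOn_univ] at hx
      obtain ⟨t, _, hli, hmt⟩ := caratheodory_cone g Finset.univ x hx
      exact Set.mem_iUnion.mpr ⟨t, Set.mem_iUnion.mpr ⟨hli, hmt⟩⟩
    · intro x hx
      obtain ⟨t, ht⟩ := Set.mem_iUnion.mp hx
      obtain ⟨hli, hmt⟩ := Set.mem_iUnion.mp ht
      obtain ⟨c, hc, rfl⟩ := hmt
      refine ⟨fun i => if i ∈ t then c i else 0, ?_, ?_⟩
      · intro i
        dsimp only
        split_ifs with h
        · exact hc i h
        · exact le_refl _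
      · rw [← Finset.sum_subset (Finset.subset_univ t) (fun i _ hi => by simp [hi])]
        exact Finset.sum_congr rfl fun i hi => by simp [hi]
  rw [hdecomp]
  refine isClosed_iUnion_of_finite fun t => ?_
  rw [Set.iUnion_eq_if]
  split_ifs with h
  · exact coneIndOn_isClosed g t h
  · exact isClosed_empty

end MWaux

section Glue

theorem recSet_zero_mem {S : Set E} : (0 : E) ∈ recSet S := by
  rw [recSet, Set.mem_iInter₂]
  intro p hp t ht
  simpa using hp

theorem recSet_add_mem {S : Set E} {u v : E} (hu : u ∈ recSet S) (hv : v ∈ recSet S) :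
    u + v ∈ recSet S := by
  rw [recSet, Set.mem_iInter₂] at *
  intro p hp t ht
  have h1 : p + t • u ∈ S := hu p hp t ht
  have h2 : (p + t • u) + t • v ∈ S := hv _ h1 t ht
  rw [smul_add, ← add_assoc]
  exact h2

theorem recSet_smul_mem {S : Set E} {u : E} {c : ℝ} (hc : 0 ≤ c) (hu : u ∈ recSet S) :
    c • u ∈ recSet S := by
  rw [recSet, Set.mem_iInter₂] at *
  intro p hp t ht
  rw [smul_smul]
  exact hu p hp (t * c) (mul_nonneg ht hc)

theorem recSet_apply {S : Set E} {u p : E} (hu : u ∈ recSet S) (hp : p ∈ S) {t : ℝ}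
    (ht : 0 ≤ t) : p + t • u ∈ S := by
  rw [recSet, Set.mem_iInter₂] at hu
  exact hu p hp t ht

open MWaux in
theorem statement0_mp {n : ℕ} (S : Set (Fin n → ℝ)) (Δ σ : Set (Fin n → ℝ))
    (hΔ : IsFiniteUnionOfPolytopes Δ) (hσ : IsPolyhedralCone σ) (hsum : S = Δ + σ) :
    ∀ p ∈ S, locRec S p = recSet S := by
  intro p hp
  obtain ⟨F, hF⟩ := hσ
  have hFσ : σ = coneF F := hF
  have hσrec : σ ⊆ recSet S := by
    intro w hw
    rw [recSet, Set.mem_iInter₂]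
    intro q hq t ht
    rw [hsum, Set.mem_add] at hq
    obtain ⟨a, ha, s, hs, rfl⟩ := hq
    have : s + t • w ∈ σ := by
      rw [hFσ] at *
      exact coneF_add_mem hs (coneF_smul_mem ht hw)
    rw [hsum, add_assoc]
    exact Set.add_mem_add ha this
  apply Set.Subset.antisymm
  · -- locRec S p ⊆ recSet S
    intro u hu
    -- Δ is bounded
    obtain ⟨k, D, hDpoly, hDU⟩ := hΔ
    have hΔcpt : IsCompact Δ := by
      rw [hDU]
      refine isCompact_iUnion fun i => ?_
      obtain ⟨Fi, _, hFi⟩ := hDpoly i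
      rw [hFi]
      exact Fi.finite_toSet.isCompact_convexHull ℝ
    obtain ⟨C, hC⟩ := isBounded_iff_forall_norm_le.mp hΔcpt.isBounded
    -- σ is closed
    obtain ⟨g, hg⟩ := coneF_eq_coneInd F
    have hσclosed : IsClosed σ := by
      rw [hFσ, hg]
      exact coneInd_isClosed g
    -- approximating sequence
    have seq : ∀ m : ℕ, ∃ d ∈ Δ, ∃ s ∈ σ, p + ((m : ℝ) + 1) • u = d + s := by
      intro m
      have hmem : p + ((m : ℝ) + 1) • u ∈ S := hu ((m : ℝ) + 1) (by positivity)
      rw [hsum, Set.mem_add] at hmem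
      obtain ⟨d, hd, s, hs, hds⟩ := hmem
      exact ⟨d, hd, s, hs, hds.symm⟩
    choose dfun hd sfun hsσ heq using seq
    set y : ℕ → (Fin n → ℝ) := fun m => ((m : ℝ) + 1)⁻¹ • sfun m with hy
    have hyσ : ∀ m, y m ∈ σ := by
      intro m
      rw [hFσ] at *
      exact coneF_smul_mem (by positivity) (hsσ m)
    have hm0 : ∀ m : ℕ, ((m : ℝ) + 1) ≠ 0 := fun m => by positivity
    have hysub : ∀ m, y m - u = ((m : ℝ) + 1)⁻¹ • (p - dfun m) := by
      intro m
      have h5 : sfun m = (p - dfun m) + ((m : ℝ) + 1) • u := by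
        have := heq m
        have h6 : sfun m = p + ((m : ℝ) + 1) • u - dfun m := by
          rw [eq_sub_iff_add_eq, add_comm]
          exact (heq m).symm
        rw [h6]
        abel
      rw [hy]
      simp only []
      rw [h5, smul_add, smul_smul, inv_mul_cancel₀ (hm0 m), one_smul]
      abel
    have hnorm : ∀ m : ℕ, ‖y m - u‖ ≤ (‖p‖ + C) / ((m : ℝ) + 1) := by
      intro m
      rw [hysub m, norm_smul]
      have h7 : ‖p - dfun m‖ ≤ ‖p‖ + C :=
        le_trans (norm_sub_le _ _) (add_le_add_right (hC _ (hd m)) _)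
      have h8 : ‖(((m : ℝ) + 1)⁻¹ : ℝ)‖ = ((m : ℝ) + 1)⁻¹ := by
        rw [Real.norm_eq_abs, abs_of_pos (by positivity)]
      rw [h8, div_eq_inv_mul]
      exact mul_le_mul_of_nonneg_left h7 (by positivity)
    have htend0 : Filter.Tendsto (fun m : ℕ => (‖p‖ + C) / ((m : ℝ) + 1))
        Filter.atTop (nhds 0) := by
      have := (tendsto_const_div_atTop_nhds_zero_nat (‖p‖ + C)).comp
        (Filter.tendsto_add_atTop_nat 1)
      refine this.congr fun m => ?_
      simp [Function.comp]
    have htend : Filter.Tendsto y Filter.atTop (nhds u) := by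
      rw [tendsto_iff_norm_sub_tendsto_zero]
      exact squeeze_zero (fun m => norm_nonneg _) hnorm htend0
    have huσ : u ∈ σ := hσclosed.mem_of_tendsto htend
      (Filter.Eventually.of_forall hyσ)
    exact hσrec huσ
  · -- recSet S ⊆ locRec S p
    intro u hu
    intro t ht
    exact recSet_apply hu hp ht

open MWaux in
theorem statement0_mpr {n : ℕ} (S : Set (Fin n → ℝ)) (hS : IsPolyhedralSet S)
    (hMW : ∀ p ∈ S, locRec S p = recSet S) :
    ∃ Δ σ : Set (Fin n → ℝ), IsFiniteUnionOfPolytopes Δ ∧ IsPolyhedralCone σ ∧ S = Δ + σ := by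
  classical
  obtain ⟨k, f, hpoly, rfl⟩ := hS
  by_cases hSne : (⋃ i, f i).Nonempty
  · obtain ⟨p₀, hp₀⟩ := hSne
    have key : ∀ i : Fin k, ∃ (D : Set (Fin n → ℝ)) (F : Finset (Fin n → ℝ)),
        IsPolytope D ∧ D ⊆ (⋃ j, f j) ∧ (↑F : Set (Fin n → ℝ)) ⊆ recSet (⋃ j, f j) ∧
        f i ⊆ D + coneF F := by
      intro i
      by_cases hne : (f i).Nonempty
      · obtain ⟨m, ff, bb, hrep⟩ := hpoly i
        obtain ⟨ι, _, hι, v, κ, _, r, hvr⟩ := mw_polyhedron m ff bb (by rw [← hrep]; exact hne)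
        have hfi : f i = convInd v + coneInd r := by rw [hrep, hvr]
        obtain ⟨F, hF⟩ := coneInd_eq_coneF r
        have hq0 : v (Classical.arbitrary ι) ∈ convInd v := convInd_gen_mem v _
        have hvconv : ∀ l, v l ∈ f i := by
          intro l
          rw [hfi]
          have : v l + 0 ∈ convInd v + coneInd r :=
            Set.add_mem_add (convInd_gen_mem v l) (coneInd_zero_mem r)
          simpa using this
        have hDsub : convInd v ⊆ (⋃ j, f j) := by
          intro x hx
          refine Set.mem_iUnion.mpr ⟨i, ?_⟩
          rw [hfi]
          have : x + 0 ∈ convInd v + coneInd r :=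
            Set.add_mem_add hx (coneInd_zero_mem r)
          simpa using this
        refine ⟨convInd v, F, ?_, hDsub, ?_, ?_⟩
        · refine ⟨Finset.image v Finset.univ,
            ⟨v (Classical.arbitrary ι), Finset.mem_image_of_mem _ (Finset.mem_univ _)⟩, ?_⟩
          rw [convInd_eq_convexHull]
          congr 1
          rw [Finset.coe_image, Finset.coe_univ, Set.image_univ]
        · intro w hw
          have hwcone : w ∈ coneInd r := by
            rw [hF]
            exact coneF_gen_mem F hw
          set q := v (Classical.arbitrary ι) with hqdef
          have hqS : q ∈ (⋃ j, f j) := Set.mem_iUnion.mpr ⟨i, hvconv _⟩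
          rw [← hMW q hqS]
          intro t ht
          refine Set.mem_iUnion.mpr ⟨i, ?_⟩
          rw [hfi]
          exact Set.add_mem_add hq0 (coneInd_smul_mem ht hwcone)
        · rw [hfi, hF]
      · rw [Set.not_nonempty_iff_eq_empty] at hne
        refine ⟨{p₀}, ∅, ⟨{p₀}, Finset.singleton_nonempty p₀, ?_⟩, ?_, ?_, ?_⟩
        · rw [Finset.coe_singleton, convexHull_singleton]
        · intro x hx
          rw [Set.mem_singleton_iff] at hx
          rw [hx]
          exact hp₀
        · simp
        · rw [hne]
          exact Set.empty_subset _
    choose D F hDpoly hDsub hFrec hfsub using key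
    refine ⟨⋃ i, D i, coneF (Finset.univ.biUnion F), ⟨k, D, hDpoly, rfl⟩,
      ⟨Finset.univ.biUnion F, rfl⟩, ?_⟩
    have hσrec : coneF (Finset.univ.biUnion F) ⊆ recSet (⋃ i, f i) := by
      refine coneF_subset recSet_zero_mem (fun x hx y hy => recSet_add_mem hx hy)
        (fun t ht x hx => recSet_smul_mem ht hx) ?_
      intro w hw
      obtain ⟨i, _, hwi⟩ := Finset.mem_biUnion.mp hw
      exact hFrec i hwi
    apply Set.Subset.antisymm
    · intro x hx
      obtain ⟨i, hxi⟩ := Set.mem_iUnion.mp hx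
      have := hfsub i hxi
      rw [Set.mem_add] at this
      obtain ⟨a, ha, s, hs, rfl⟩ := this
      refine Set.add_mem_add (Set.mem_iUnion.mpr ⟨i, ha⟩) ?_
      refine coneF_subset (coneF_zero_mem _) (fun x hx y hy => coneF_add_mem hx hy)
        (fun t ht x hx => coneF_smul_mem ht hx) ?_ hs
      intro w hw
      exact coneF_gen_mem _ (Finset.mem_biUnion.mpr ⟨i, Finset.mem_univ i, hw⟩)
    · intro x hx
      rw [Set.mem_add] at hx
      obtain ⟨a, ha, s, hs, rfl⟩ := hx
      obtain ⟨i, hai⟩ := Set.mem_iUnion.mp ha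
      have haS : a ∈ (⋃ j, f j) := hDsub i hai
      have hsrec : s ∈ recSet (⋃ j, f j) := hσrec hs
      have := recSet_apply hsrec haS (le_refl 0 : (0:ℝ) ≤ 0)
      have h1 := recSet_apply hsrec haS (zero_le_one : (0:ℝ) ≤ 1)
      rw [one_smul] at h1
      exact h1
  · rw [Set.not_nonempty_iff_eq_empty] at hSne
    rw [hSne]
    refine ⟨∅, coneF ∅, ⟨0, Fin.elim0, fun i => i.elim0, ?_⟩, ⟨∅, rfl⟩, (Set.empty_add).symm⟩
    exact (Set.iUnion_of_empty _).symm

end Glue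

/-- Lemma 18 / Minkowski-Weyl condition: for a polyhedral set
`E ⊆ ℝⁿ`, having a decomposition `E = Δ + σ` with `Δ` a finite union of
polytopes and `σ` a convex polyhedral cone is equivalent to all local recession
cones of `E` being equal to the recession cone of `E`. -/
theorem statement0 {n : ℕ} (S : Set (Fin n → ℝ)) (hS : IsPolyhedralSet S) :
    (∃ Δ σ : Set (Fin n → ℝ), IsFiniteUnionOfPolytopes Δ ∧ IsPolyhedralCone σ ∧
      S = Δ + σ) ↔ ∀ p ∈ S, locRec S p = recSet S := by
  constructor
  · rintro ⟨Δ, σ, hΔ, hσ, hsum⟩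
    exact statement0_mp S Δ σ hΔ hσ hsum
  · exact statement0_mpr S hS
end

section
/- Let Π be a polyhedral complex in ℝⁿ such that the support |Π| is connected and satisfies the Minkowski-Weyl condition (rec_p(|Π|) = rec(|Π|) for all p ∈ |Π|). Then the collection rec(Π) = {rec(Λ) | Λ ∈ Π} of recession cones of the polyhedra of Π is a conic polyhedral complex in ℝⁿ: every face of a member of rec(Π) belongs to rec(Π), and any two members of rec(Π) are either disjoint or intersect in a common face. -/
open Set Pointwise

variable {E : Type*} [NormedAddCommGroup E] [NormedSpace ℝ E]

section BGSAux
variable {E : Type*} [NormedAddCommGroup E] [NormedSpace ℝ E]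

set_option linter.unusedSectionVars false

/-- finitely generated cone over an indexed family -/
def fgcone {ι : Type*} [Fintype ι] (v : ι → E) : Set E :=
  {x | ∃ c : ι → ℝ, (∀ i, 0 ≤ c i) ∧ x = ∑ i, c i • v i}

lemma zero_mem_fgcone {ι : Type*} [Fintype ι] (v : ι → E) : (0:E) ∈ fgcone v :=
  ⟨fun _ => 0, fun _ => le_refl _, by simp⟩

lemma mem_fgcone_self {ι : Type*} [Fintype ι] (v : ι → E) (i : ι) : v i ∈ fgcone v := by
  classical
  refine ⟨fun j => if j = i then 1 else 0, fun j => by dsimp only; split <;> norm_num, ?_⟩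
  simp [ite_smul]

lemma fgcone_add {ι : Type*} [Fintype ι] {v : ι → E} {x y : E}
    (hx : x ∈ fgcone v) (hy : y ∈ fgcone v) : x + y ∈ fgcone v := by
  obtain ⟨c, hc, rfl⟩ := hx; obtain ⟨d, hd, rfl⟩ := hy
  exact ⟨c + d, fun i => add_nonneg (hc i) (hd i), by
    simp [add_smul, Finset.sum_add_distrib]⟩

lemma fgcone_smul {ι : Type*} [Fintype ι] {v : ι → E} {x : E} {t : ℝ}
    (ht : 0 ≤ t) (hx : x ∈ fgcone v) : t • x ∈ fgcone v := by
  obtain ⟨c, hc, rfl⟩ := hx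
  exact ⟨fun i => t * c i, fun i => mul_nonneg ht (hc i), by
    rw [Finset.smul_sum]; exact Finset.sum_congr rfl fun i _ => by rw [smul_smul]⟩

lemma pair_mem_fgcone {ι : Type*} [Fintype ι] {v : ι → E} (j l : ι) {a b : ℝ}
    (ha : 0 ≤ a) (hb : 0 ≤ b) : a • v j + b • v l ∈ fgcone v :=
  fgcone_add (fgcone_smul ha (mem_fgcone_self v j)) (fgcone_smul hb (mem_fgcone_self v l))

lemma fgcone_reindex {ι κ : Type*} [Fintype ι] [Fintype κ] (e : κ ≃ ι) (v : ι → E) :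
    fgcone (v ∘ e) = fgcone v := by
  ext x
  constructor
  · rintro ⟨c, hc, rfl⟩
    refine ⟨fun i => c (e.symm i), fun i => hc _, ?_⟩
    rw [← Equiv.sum_comp e (fun i => c (e.symm i) • v i)]
    exact Finset.sum_congr rfl fun j _ => by simp
  · rintro ⟨c, hc, rfl⟩
    refine ⟨fun j => c (e j), fun j => hc _, ?_⟩
    rw [← Equiv.sum_comp e (fun i => c i • v i)]
    rfl

lemma fgcone_to_fin {ι : Type*} [Fintype ι] (v : ι → E) :
    ∃ (k : ℕ) (w : Fin k → E), fgcone v = fgcone w :=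
  ⟨Fintype.card ι, v ∘ (Fintype.equivFin ι).symm,
    (fgcone_reindex (Fintype.equivFin ι).symm v).symm⟩

lemma fgcone_subset_hcone {ι κ : Type*} [Fintype ι] (v : ι → E) (f : κ → E →ₗ[ℝ] ℝ)
    (h : ∀ i k, f k (v i) ≤ 0) : fgcone v ⊆ {x | ∀ k, f k x ≤ 0} := by
  rintro x ⟨c, hc, rfl⟩ k
  rw [map_sum]
  refine Finset.sum_nonpos fun i _ => ?_
  rw [map_smul, smul_eq_mul]
  exact mul_nonpos_iff.2 (Or.inl ⟨hc i, h i k⟩)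

lemma univ_eq_fgcone [FiniteDimensional ℝ E] :
    ∃ (n : ℕ) (s : Fin n → E), (univ : Set E) = fgcone (Sum.elim s (fun i => -(s i))) := by
  obtain ⟨n, s, hs⟩ := Module.Finite.exists_fin (R := ℝ) (M := E)
  refine ⟨n, s, ?_⟩
  ext x
  simp only [mem_univ, true_iff]
  have hx : x ∈ Submodule.span ℝ (range s) := hs ▸ Submodule.mem_top
  rw [Submodule.mem_span_range_iff_exists_fun] at hx
  obtain ⟨c, hc⟩ := hx
  refine ⟨Sum.elim (fun i => max (c i) 0) (fun i => max (-c i) 0), ?_, ?_⟩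
  · rintro (i | i) <;> exact le_max_right _ _
  · rw [Fintype.sum_sum_type]
    simp only [Sum.elim_inl, Sum.elim_inr]
    rw [← Finset.sum_add_distrib, ← hc]
    refine Finset.sum_congr rfl fun i _ => ?_
    rw [smul_neg, ← sub_eq_add_neg, ← sub_smul, max_zero_sub_max_neg_zero_eq_self]



lemma fm_step {ι : Type*} [Fintype ι] (v : ι → E) (g : E →ₗ[ℝ] ℝ) :
    ∃ w : (ι ⊕ ι × ι) → E, {x | x ∈ fgcone v ∧ g x ≤ 0} = fgcone w := by
  classical
  set w : ι ⊕ ι × ι → E := Sum.elim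
      (fun j => if g (v j) ≤ 0 then v j else 0)
      (fun p => if 0 < g (v p.1) ∧ g (v p.2) < 0
        then g (v p.1) • v p.2 - g (v p.2) • v p.1 else 0) with hw
  have hwmem : ∀ j, w j ∈ fgcone v := by
    rintro (j | ⟨j, l⟩)
    · dsimp [w]; split
      · exact mem_fgcone_self v j
      · exact zero_mem_fgcone v
    · dsimp [w]; split
      · rename_i h
        rw [sub_eq_add_neg, ← neg_smul]
        exact pair_mem_fgcone l j (le_of_lt h.1) (by linarith [h.2])
      · exact zero_mem_fgcone v
  have hwg : ∀ j, g (w j) ≤ 0 := by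
    rintro (j | ⟨j, l⟩)
    · dsimp [w]; split
      · assumption
      · simp
    · dsimp [w]; split
      · rw [map_sub, map_smul, map_smul, smul_eq_mul, smul_eq_mul]
        ring_nf
        exact le_refl 0
      · simp
  refine ⟨w, Set.Subset.antisymm ?_ ?_⟩
  swap
  · rintro x ⟨d, hd, rfl⟩
    constructor
    · exact Finset.sum_induction _ (· ∈ fgcone v) (fun a b ha hb => fgcone_add ha hb)
        (zero_mem_fgcone v) (fun j _ => fgcone_smul (hd j) (hwmem j))
    · rw [map_sum]
      refine Finset.sum_nonpos fun j _ => ?_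
      rw [map_smul, smul_eq_mul]
      exact mul_nonpos_iff.2 (Or.inl ⟨hd j, hwg j⟩)
  · rintro x ⟨⟨c, hc, rfl⟩, hg⟩
    set Pos : Finset ι := Finset.univ.filter (fun j => 0 < g (v j)) with hPos
    set Neg : Finset ι := Finset.univ.filter (fun j => g (v j) < 0) with hNeg
    set Zer : Finset ι := Finset.univ.filter
      (fun j => ¬ 0 < g (v j) ∧ ¬ g (v j) < 0) with hZer
    have hmemP : ∀ j ∈ Pos, 0 < g (v j) := fun j hj => (Finset.mem_filter.1 hj).2
    have hmemN : ∀ j ∈ Neg, g (v j) < 0 := fun j hj => (Finset.mem_filter.1 hj).2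
    have hmemZ : ∀ j ∈ Zer, g (v j) = 0 := fun j hj => by
      have h := (Finset.mem_filter.1 hj).2
      exact le_antisymm (not_lt.1 h.1) (not_lt.1 h.2)
    have e1 : Finset.univ.filter (fun j => ¬ 0 < g (v j) ∧ g (v j) < 0) = Neg := by
      rw [hNeg]
      apply Finset.filter_congr
      intro j _
      constructor
      · tauto
      · intro h; exact ⟨not_lt_of_gt h, h⟩
    have hsplitE : ∀ (F : ι → E), ∑ j, F j = ∑ j ∈ Pos, F j + ∑ j ∈ Neg, F j + ∑ j ∈ Zer, F j := by
      intro F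
      rw [← Finset.sum_filter_add_sum_filter_not Finset.univ (fun j => 0 < g (v j)) F,
        ← Finset.sum_filter_add_sum_filter_not (Finset.univ.filter (fun j => ¬ 0 < g (v j)))
          (fun j => g (v j) < 0) F, Finset.filter_filter, Finset.filter_filter]
      rw [e1, add_assoc]
    have hsplitR : ∀ (F : ι → ℝ), ∑ j, F j = ∑ j ∈ Pos, F j + ∑ j ∈ Neg, F j + ∑ j ∈ Zer, F j := by
      intro F
      rw [← Finset.sum_filter_add_sum_filter_not Finset.univ (fun j => 0 < g (v j)) F,
        ← Finset.sum_filter_add_sum_filter_not (Finset.univ.filter (fun j => ¬ 0 < g (v j)))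
          (fun j => g (v j) < 0) F, Finset.filter_filter, Finset.filter_filter]
      rw [e1, add_assoc]
    -- scalar bookkeeping
    set s : ℝ := ∑ j ∈ Pos, c j * g (v j) with hs
    set r : ℝ := ∑ l ∈ Neg, c l * (-(g (v l))) with hr
    have hs0 : 0 ≤ s := Finset.sum_nonneg fun j hj =>
      mul_nonneg (hc j) (le_of_lt (hmemP j hj))
    have hr0 : 0 ≤ r := Finset.sum_nonneg fun l hl =>
      mul_nonneg (hc l) (by linarith [hmemN l hl])
    have hNegsum : ∑ l ∈ Neg, c l * g (v l) = -r := by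
      rw [hr, ← Finset.sum_neg_distrib]
      exact Finset.sum_congr rfl fun l _ => by ring
    have hgx : g (∑ i, c i • v i) = s - r := by
      rw [map_sum, hsplitR (fun i => g (c i • v i))]
      have z1 : ∑ j ∈ Zer, g (c j • v j) = 0 :=
        Finset.sum_eq_zero fun j hj => by rw [map_smul, smul_eq_mul, hmemZ j hj, mul_zero]
      have z2 : ∑ j ∈ Pos, g (c j • v j) = s :=
        Finset.sum_congr rfl fun j _ => by rw [map_smul, smul_eq_mul]
      have z3 : ∑ l ∈ Neg, g (c l • v l) = -r := by
        rw [← hNegsum]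
        exact Finset.sum_congr rfl fun l _ => by rw [map_smul, smul_eq_mul]
      rw [z1, z2, z3, add_zero, sub_eq_add_neg]
    have hsr : s - r ≤ 0 := by rw [← hgx]; exact hg
    by_cases hcase : s ≤ 0
    · -- s = 0
      have hs0' : s = 0 := le_antisymm hcase hs0
      have hczero : ∀ j ∈ Pos, c j = 0 := by
        intro j hj
        have h2 := (Finset.sum_eq_zero_iff_of_nonneg (fun j hj =>
          mul_nonneg (hc j) (le_of_lt (hmemP j hj)))).1 hs0' j hj
        rcases mul_eq_zero.1 h2 with h3 | h3
        · exact h3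
        · exact absurd h3 (ne_of_gt (hmemP j hj))
      refine ⟨Sum.elim c (fun _ => 0), by rintro (j | p); exacts [hc j, le_refl _], ?_⟩
      rw [Fintype.sum_sum_type]
      have hz : ∑ p : ι × ι, Sum.elim c (fun _ => (0:ℝ)) (Sum.inr p) • w (Sum.inr p) = 0 :=
        Finset.sum_eq_zero fun p _ => by simp
      rw [hz, add_zero]
      refine Finset.sum_congr rfl fun j _ => ?_
      dsimp [w]
      split
      · rfl
      · rename_i h
        rw [hczero j (Finset.mem_filter.2 ⟨Finset.mem_univ _, lt_of_not_ge h⟩)]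
        simp
    · -- 0 < s ≤ r
      have hspos : 0 < s := lt_of_not_ge hcase
      have hrpos : 0 < r := by linarith
      have hrne : r ≠ 0 := ne_of_gt hrpos
      set d : ι ⊕ ι × ι → ℝ := Sum.elim
          (fun j => if 0 < g (v j) then 0 else if g (v j) < 0 then c j * (1 - s / r) else c j)
          (fun p => if 0 < g (v p.1) ∧ g (v p.2) < 0 then c p.1 * c p.2 / r else 0) with hd
      have hsdiv : s / r ≤ 1 := (div_le_one hrpos).2 (by linarith)
      refine ⟨d, ?_, ?_⟩
      · rintro (j | p)
        · dsimp only [d, Sum.elim_inl]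
          split
          · exact le_refl _
          · split
            · exact mul_nonneg (hc j) (by linarith)
            · exact hc j
        · dsimp only [d, Sum.elim_inr]
          split
          · exact div_nonneg (mul_nonneg (hc _) (hc _)) (le_of_lt hrpos)
          · exact le_refl _
      · rw [Fintype.sum_sum_type]
        -- the inr part
        have hinr : ∑ p : ι × ι, d (Sum.inr p) • w (Sum.inr p)
            = (∑ l ∈ Neg, (s / r * c l) • v l) + ∑ j ∈ Pos, c j • v j := by
          rw [Fintype.sum_prod_type]
          have hterm : ∀ j l : ι, d (Sum.inr (j, l)) • w (Sum.inr (j, l))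
              = if 0 < g (v j) then (if g (v l) < 0 then
                  (c j * c l / r) • (g (v j) • v l - g (v l) • v j) else 0) else 0 := by
            intro j l
            dsimp only [d, w, Sum.elim_inr]
            by_cases h1 : 0 < g (v j) <;> by_cases h2 : g (v l) < 0 <;> simp [h1, h2]
          have houter : ∀ j : ι, ∑ l, d (Sum.inr (j, l)) • w (Sum.inr (j, l))
              = if 0 < g (v j) then
                  ∑ l ∈ Neg, (c j * c l / r) • (g (v j) • v l - g (v l) • v j) else 0 := by
            intro j
            simp only [hterm]
            by_cases h1 : 0 < g (v j)
            · simp only [h1, if_true]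
              rw [Finset.sum_filter]
            · simp only [h1, if_false, Finset.sum_const_zero]
          calc ∑ j, ∑ l, d (Sum.inr (j, l)) • w (Sum.inr (j, l))
              = ∑ j, (if 0 < g (v j) then
                  ∑ l ∈ Neg, (c j * c l / r) • (g (v j) • v l - g (v l) • v j) else 0) :=
                Finset.sum_congr rfl fun j _ => houter j
            _ = ∑ j ∈ Pos, ∑ l ∈ Neg, (c j * c l / r) • (g (v j) • v l - g (v l) • v j) := by
                rw [← Finset.sum_filter]
            _ = ∑ j ∈ Pos, ((∑ l ∈ Neg, ((c j * g (v j)) * (c l / r)) • v l)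
                  - (∑ l ∈ Neg, ((c j / r) * (c l * g (v l))) • v j)) := by
                refine Finset.sum_congr rfl fun j _ => ?_
                rw [← Finset.sum_sub_distrib]
                refine Finset.sum_congr rfl fun l _ => ?_
                rw [smul_sub, smul_smul, smul_smul]
                congr 2 <;> ring
            _ = (∑ j ∈ Pos, ∑ l ∈ Neg, ((c j * g (v j)) * (c l / r)) • v l)
                  - ∑ j ∈ Pos, (∑ l ∈ Neg, ((c j / r) * (c l * g (v l)))) • v j := by
                rw [Finset.sum_sub_distrib]
                congr 1
                exact Finset.sum_congr rfl fun j _ => by rw [Finset.sum_smul]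
            _ = (∑ l ∈ Neg, (s / r * c l) • v l) + ∑ j ∈ Pos, c j • v j := by
                have hA : (∑ j ∈ Pos, ∑ l ∈ Neg, ((c j * g (v j)) * (c l / r)) • v l)
                    = ∑ l ∈ Neg, (s / r * c l) • v l := by
                  rw [Finset.sum_comm]
                  refine Finset.sum_congr rfl fun l _ => ?_
                  rw [← Finset.sum_smul, ← Finset.sum_mul, ← hs]
                  congr 1
                  ring
                have hB : (∑ j ∈ Pos, (∑ l ∈ Neg, ((c j / r) * (c l * g (v l)))) • v j)
                    = -(∑ j ∈ Pos, c j • v j) := by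
                  rw [← Finset.sum_neg_distrib]
                  refine Finset.sum_congr rfl fun j _ => ?_
                  rw [← Finset.mul_sum, hNegsum, ← neg_smul]
                  congr 1
                  field_simp
                rw [hA, hB, sub_neg_eq_add]
        rw [hinr]
        -- the inl part
        have hinl : ∑ j, d (Sum.inl j) • w (Sum.inl j)
            = (∑ l ∈ Neg, (c l * (1 - s / r)) • v l) + ∑ j ∈ Zer, c j • v j := by
          rw [hsplitE (fun j => d (Sum.inl j) • w (Sum.inl j))]
          have hP : ∑ j ∈ Pos, d (Sum.inl j) • w (Sum.inl j) = 0 :=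
            Finset.sum_eq_zero fun j hj => by
              dsimp only [d, Sum.elim_inl]
              rw [if_pos (hmemP j hj), zero_smul]
          have hN : ∑ l ∈ Neg, d (Sum.inl l) • w (Sum.inl l)
              = ∑ l ∈ Neg, (c l * (1 - s / r)) • v l :=
            Finset.sum_congr rfl fun l hl => by
              have h := hmemN l hl
              dsimp only [d, w, Sum.elim_inl]
              rw [if_neg (not_lt_of_gt h), if_pos h, if_pos (le_of_lt h)]
          have hZ : ∑ j ∈ Zer, d (Sum.inl j) • w (Sum.inl j) = ∑ j ∈ Zer, c j • v j :=
            Finset.sum_congr rfl fun j hj => by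
              have h := hmemZ j hj
              dsimp only [d, w, Sum.elim_inl]
              rw [if_neg (by rw [h]; exact lt_irrefl 0), if_neg (by rw [h]; exact lt_irrefl 0),
                if_pos (le_of_eq h)]
          rw [hP, hN, hZ, zero_add]
        rw [hinl, hsplitE (fun i => c i • v i)]
        have hcomb : (∑ l ∈ Neg, (c l * (1 - s / r)) • v l) + ∑ l ∈ Neg, (s / r * c l) • v l
            = ∑ l ∈ Neg, c l • v l := by
          rw [← Finset.sum_add_distrib]
          refine Finset.sum_congr rfl fun l _ => ?_
          rw [← add_smul]
          congr 1
          ring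
        calc ∑ j ∈ Pos, c j • v j + ∑ l ∈ Neg, c l • v l + ∑ j ∈ Zer, c j • v j
            = ((∑ l ∈ Neg, (c l * (1 - s / r)) • v l) + ∑ j ∈ Zer, c j • v j)
              + ((∑ l ∈ Neg, (s / r * c l) • v l) + ∑ j ∈ Pos, c j • v j) := by
              rw [← hcomb]; abel
          _ = _ := rfl



lemma hcone_fg_list [FiniteDimensional ℝ E] (L : List (E →ₗ[ℝ] ℝ)) :
    ∃ (k : ℕ) (v : Fin k → E), {x : E | ∀ g ∈ L, g x ≤ 0} = fgcone v := by
  induction L with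
  | nil =>
    obtain ⟨n, s, h⟩ := univ_eq_fgcone (E := E)
    obtain ⟨k, w, hw⟩ := fgcone_to_fin (Sum.elim s (fun i => -(s i)))
    refine ⟨k, w, ?_⟩
    rw [← hw, ← h]
    ext x; simp
  | cons g L ih =>
    obtain ⟨k, v, hv⟩ := ih
    obtain ⟨w, hw⟩ := fm_step v g
    obtain ⟨k', w', hww⟩ := fgcone_to_fin w
    refine ⟨k', w', ?_⟩
    rw [← hww, ← hw, ← hv]
    ext x
    simp only [List.mem_cons, mem_setOf_eq]
    constructor
    · intro h; exact ⟨fun g' hg' => h g' (Or.inr hg'), h g (Or.inl rfl)⟩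
    · rintro ⟨h1, h2⟩ g' (rfl | hg')
      exacts [h2, h1 g' hg']

theorem hcone_fg [FiniteDimensional ℝ E] {ι : Type*} [Fintype ι] (f : ι → E →ₗ[ℝ] ℝ) :
    ∃ (k : ℕ) (v : Fin k → E), {x : E | ∀ i, f i x ≤ 0} = fgcone v := by
  classical
  obtain ⟨k, v, hv⟩ := hcone_fg_list ((Finset.univ : Finset ι).toList.map f)
  refine ⟨k, v, ?_⟩
  rw [← hv]
  ext x
  simp only [mem_setOf_eq, List.mem_map, Finset.mem_toList, Finset.mem_univ, true_and]
  constructor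
  · rintro h g ⟨i, rfl⟩; exact h i
  · intro h i; exact h (f i) ⟨i, rfl⟩

lemma isPolyhedralCone_of_eq_fgcone {k : ℕ} {v : Fin k → E} {S : Set E}
    (hS : S = fgcone v) : IsPolyhedralCone S := by
  classical
  refine ⟨Finset.univ.image v, ?_⟩
  rw [hS]; ext x
  constructor
  · rintro ⟨c, hc, rfl⟩
    refine ⟨fun w => ∑ i ∈ Finset.univ.filter (fun i => v i = w), c i,
      fun w => Finset.sum_nonneg (fun i _ => hc i), ?_⟩
    rw [← Finset.sum_fiberwise_of_maps_to
      (fun i _ => Finset.mem_image_of_mem v (Finset.mem_univ i)) (fun i => c i • v i)]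
    refine Finset.sum_congr rfl fun w hw => ?_
    rw [Finset.sum_smul]
    refine Finset.sum_congr rfl fun i hi => ?_
    rw [(Finset.mem_filter.1 hi).2]
  · rintro ⟨c, hc, rfl⟩
    refine Finset.sum_induction _ (· ∈ fgcone v) (fun a b ha hb => fgcone_add ha hb)
      (zero_mem_fgcone v) ?_
    intro w hw
    obtain ⟨i, _, rfl⟩ := Finset.mem_image.1 hw
    exact fgcone_smul (hc _) (mem_fgcone_self v i)

lemma hpoly_closed [FiniteDimensional ℝ E] {ι : Type*} (f : ι → E →ₗ[ℝ] ℝ) (b : ι → ℝ) :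
    IsClosed {x : E | ∀ i, f i x ≤ b i} := by
  have h : {x : E | ∀ i, f i x ≤ b i} = ⋂ i, {x | f i x ≤ b i} := by ext; simp
  rw [h]
  exact isClosed_iInter fun i =>
    isClosed_le (f i).continuous_of_finiteDimensional continuous_const

lemma hpoly_convex {ι : Type*} (f : ι → E →ₗ[ℝ] ℝ) (b : ι → ℝ) :
    Convex ℝ {x : E | ∀ i, f i x ≤ b i} := by
  intro x hx y hy a a' ha ha' haa i
  rw [map_add, map_smul, map_smul, smul_eq_mul, smul_eq_mul]
  have h1 := mul_le_mul_of_nonneg_left (hx i) ha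
  have h2 := mul_le_mul_of_nonneg_left (hy i) ha'
  calc a * (f i) x + a' * (f i) y ≤ a * b i + a' * b i := add_le_add h1 h2
    _ = b i := by rw [← add_mul, haa, one_mul]

lemma zero_mem_recPoly (S : Set E) : (0:E) ∈ recPoly S := fun x hx => by simpa

lemma recPoly_add {S : Set E} {u v : E} (hu : u ∈ recPoly S) (hv : v ∈ recPoly S) :
    u + v ∈ recPoly S := fun x hx => by
  have := hv _ (hu x hx); rwa [add_assoc] at this

lemma recPoly_hpoly {ι : Type*} {f : ι → E →ₗ[ℝ] ℝ} {b : ι → ℝ} {S : Set E}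
    (hS : S = {x | ∀ i, f i x ≤ b i}) (hne : S.Nonempty) :
    recPoly S = {u | ∀ i, f i u ≤ 0} := by
  obtain ⟨x₀, hx₀⟩ := hne
  ext u
  constructor
  · intro hu i
    have hn : ∀ n : ℕ, x₀ + (n : ℝ) • u ∈ S := by
      intro n
      induction n with
      | zero => simpa using hx₀
      | succ n ih =>
        have h2 := hu _ ih
        have h3 : x₀ + (n : ℝ) • u + u = x₀ + ((n : ℝ) + 1) • u := by
          rw [add_smul, one_smul, add_assoc]
        rw [h3] at h2
        push_cast
        exact h2
    by_contra hpos
    push_neg at hpos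
    obtain ⟨n, hn'⟩ := exists_nat_gt ((b i - f i x₀) / f i u)
    have hmem := hn n
    rw [hS, mem_setOf_eq] at hmem
    have h4 := hmem i
    rw [map_add, map_smul, smul_eq_mul] at h4
    have h5 := (div_lt_iff₀ hpos).1 hn'
    linarith
  · intro hu x hx
    rw [hS, mem_setOf_eq] at hx ⊢
    intro i
    rw [map_add]
    linarith [hx i, hu i]

lemma hpoly_ray {ι : Type*} {f : ι → E →ₗ[ℝ] ℝ} {b : ι → ℝ} {S : Set E}
    (hS : S = {x | ∀ i, f i x ≤ b i}) {p u : E} {t : ℝ}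
    (hp : p ∈ S) (hu : u ∈ recPoly S) (ht : 0 ≤ t) : p + t • u ∈ S := by
  have hrec := recPoly_hpoly hS ⟨p, hp⟩
  rw [hrec, mem_setOf_eq] at hu
  rw [hS, mem_setOf_eq] at hp ⊢
  intro i
  rw [map_add, map_smul, smul_eq_mul]
  have := mul_nonpos_iff.2 (Or.inl ⟨ht, hu i⟩)
  linarith [hp i]

lemma hpoly_min [FiniteDimensional ℝ E] {ι : Type*} [Fintype ι]
    {f : ι → E →ₗ[ℝ] ℝ} {b : ι → ℝ} {S : Set E}
    (hS : S = {x | ∀ i, f i x ≤ b i}) (hne : S.Nonempty)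
    (z : E →ₗ[ℝ] ℝ) (hz : ∀ u, (∀ i, f i u ≤ 0) → 0 ≤ z u) :
    ∃ x ∈ S, ∀ y ∈ S, z x ≤ z y := by
  classical
  set F : (ι ⊕ Unit) → (E × ℝ) →ₗ[ℝ] ℝ := Sum.elim
      (fun i => (f i).comp (LinearMap.fst ℝ E ℝ) - b i • (LinearMap.snd ℝ E ℝ))
      (fun _ => -(LinearMap.snd ℝ E ℝ)) with hF
  have hmemC : ∀ (x : E) (t : ℝ),
      (∀ j, F j (x, t) ≤ 0) ↔ ((∀ i, f i x ≤ b i * t) ∧ 0 ≤ t) := by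
    intro x t
    constructor
    · intro h
      refine ⟨fun i => ?_, ?_⟩
      · have := h (Sum.inl i)
        simp only [hF, Sum.elim_inl, LinearMap.sub_apply, LinearMap.comp_apply,
          LinearMap.fst_apply, LinearMap.smul_apply, LinearMap.snd_apply, smul_eq_mul] at this
        linarith
      · have := h (Sum.inr ())
        simp only [hF, Sum.elim_inr, LinearMap.neg_apply, LinearMap.snd_apply] at this
        linarith
    · rintro ⟨h1, h2⟩ (i | u)
      · simp only [hF, Sum.elim_inl, LinearMap.sub_apply, LinearMap.comp_apply,
          LinearMap.fst_apply, LinearMap.smul_apply, LinearMap.snd_apply, smul_eq_mul]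
        linarith [h1 i]
      · simp only [hF, Sum.elim_inr, LinearMap.neg_apply, LinearMap.snd_apply]
        linarith
  obtain ⟨k, wg, hC⟩ := hcone_fg F
  set vv : Fin k → E := fun j => (wg j).1 with hvv
  set τ : Fin k → ℝ := fun j => (wg j).2 with hτ
  have hgen : ∀ j, (∀ i, f i (vv j) ≤ b i * τ j) ∧ 0 ≤ τ j := by
    intro j
    have hj : wg j ∈ {x : E × ℝ | ∀ i, F i x ≤ 0} := hC ▸ mem_fgcone_self wg j
    have := (hmemC (vv j) (τ j)).1 (by simpa using hj)
    exact this
  set A : Finset (Fin k) := Finset.univ.filter (fun j => 0 < τ j) with hA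
  -- decompose membership in S into coefficients
  have hdecomp : ∀ y ∈ S, ∃ c : Fin k → ℝ, (∀ j, 0 ≤ c j) ∧
      y = ∑ j, c j • vv j ∧ (1 : ℝ) = ∑ j, c j * τ j := by
    intro y hy
    have hyC : ((y, (1:ℝ)) : E × ℝ) ∈ {x : E × ℝ | ∀ i, F i x ≤ 0} := by
      rw [mem_setOf_eq, hmemC]
      exact ⟨fun i => by rw [mul_one]; exact (hS ▸ hy) i, zero_le_one⟩
    rw [hC] at hyC
    obtain ⟨c, hc, hsum⟩ := hyC
    refine ⟨c, hc, ?_, ?_⟩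
    · have := congrArg (LinearMap.fst ℝ E ℝ) hsum
      simpa [map_sum, hvv] using this
    · have := congrArg (LinearMap.snd ℝ E ℝ) hsum
      simpa [map_sum, hτ, smul_eq_mul] using this
  have hAne : A.Nonempty := by
    obtain ⟨x₀, hx₀⟩ := hne
    obtain ⟨c, hc, _, hone⟩ := hdecomp x₀ hx₀
    by_contra hA0
    rw [Finset.not_nonempty_iff_eq_empty] at hA0
    have : ∀ j, τ j = 0 := by
      intro j
      by_contra hj
      have : j ∈ A := Finset.mem_filter.2 ⟨Finset.mem_univ _,
        lt_of_le_of_ne (hgen j).2 (Ne.symm hj)⟩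
      rw [hA0] at this
      exact absurd this (Finset.notMem_empty j)
    rw [Finset.sum_congr rfl (fun j _ => by rw [this j, mul_zero])] at hone
    simp at hone
  obtain ⟨j₀, hj₀A, hj₀min⟩ := Finset.exists_min_image A (fun j => z ((τ j)⁻¹ • vv j)) hAne
  have hτ₀ : 0 < τ j₀ := (Finset.mem_filter.1 hj₀A).2
  refine ⟨(τ j₀)⁻¹ • vv j₀, ?_, ?_⟩
  · rw [hS, mem_setOf_eq]
    intro i
    rw [map_smul, smul_eq_mul]
    have h1 := mul_le_mul_of_nonneg_left ((hgen j₀).1 i) (inv_nonneg.2 (le_of_lt hτ₀))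
    calc (τ j₀)⁻¹ * f i (vv j₀) ≤ (τ j₀)⁻¹ * (b i * τ j₀) := h1
      _ = b i := by field_simp
  · intro y hy
    obtain ⟨c, hc, hy1, hy2⟩ := hdecomp y hy
    have hkey : ∀ j, c j * τ j * z ((τ j₀)⁻¹ • vv j₀) ≤ c j * z (vv j) := by
      intro j
      by_cases hj : 0 < τ j
      · have hmin := hj₀min j (Finset.mem_filter.2 ⟨Finset.mem_univ _, hj⟩)
        have h2 : z (vv j) = τ j * z ((τ j)⁻¹ • vv j) := by
          rw [map_smul, smul_eq_mul]
          field_simp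
        rw [h2]
        have h3 := mul_le_mul_of_nonneg_left hmin (le_of_lt hj)
        calc c j * τ j * z ((τ j₀)⁻¹ • vv j₀)
            = c j * (τ j * z ((τ j₀)⁻¹ • vv j₀)) := by ring
          _ ≤ c j * (τ j * z ((τ j)⁻¹ • vv j)) := mul_le_mul_of_nonneg_left h3 (hc j)
      · have hτj : τ j = 0 := le_antisymm (not_lt.1 hj) (hgen j).2
        rw [hτj, mul_zero, zero_mul]
        refine mul_nonneg (hc j) (hz _ (fun i => ?_))
        have := (hgen j).1 i
        rw [hτj, mul_zero] at this
        exact this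
    calc z ((τ j₀)⁻¹ • vv j₀)
        = (∑ j, c j * τ j) * z ((τ j₀)⁻¹ • vv j₀) := by rw [← hy2, one_mul]
      _ = ∑ j, c j * τ j * z ((τ j₀)⁻¹ • vv j₀) := by rw [Finset.sum_mul]
      _ ≤ ∑ j, c j * z (vv j) := Finset.sum_le_sum (fun j _ => hkey j)
      _ = z y := by
            rw [hy1, map_sum]
            exact Finset.sum_congr rfl fun j _ => by rw [map_smul, smul_eq_mul]


/-- a face of a cone, in normalized form -/
def IsConeFaceOf (F C : Set E) : Prop :=
  ∃ z : E →ₗ[ℝ] ℝ, (∀ v ∈ C, 0 ≤ z v) ∧ F = {u ∈ C | z u ≤ 0}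

lemma IsConeFaceOf.subset {F C : Set E} (h : IsConeFaceOf F C) : F ⊆ C := by
  obtain ⟨z, _, rfl⟩ := h; exact fun u hu => hu.1

lemma IsConeFaceOf.refl (C : Set E) : IsConeFaceOf C C :=
  ⟨0, fun v _ => le_refl 0, by ext u; simp⟩

lemma IsConeFaceOf.inter {F₁ F₂ C : Set E} (h₁ : IsConeFaceOf F₁ C)
    (h₂ : IsConeFaceOf F₂ C) : IsConeFaceOf (F₁ ∩ F₂) C := by
  obtain ⟨z₁, hz₁, rfl⟩ := h₁
  obtain ⟨z₂, hz₂, rfl⟩ := h₂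
  refine ⟨z₁ + z₂, fun v hv => add_nonneg (hz₁ v hv) (hz₂ v hv), ?_⟩
  ext u
  simp only [mem_inter_iff, mem_setOf_eq, LinearMap.add_apply]
  constructor
  · rintro ⟨⟨hu, h1⟩, _, h2⟩
    exact ⟨hu, by linarith⟩
  · rintro ⟨hu, h12⟩
    have := hz₁ u hu; have := hz₂ u hu
    exact ⟨⟨hu, by linarith⟩, hu, by linarith⟩

lemma IsConeFaceOf.shrink {G F C : Set E} (hG : IsConeFaceOf G C)
    (hGF : G ⊆ F) (hFC : F ⊆ C) : IsConeFaceOf G F := by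
  obtain ⟨z, hz, hGeq⟩ := hG
  refine ⟨z, fun v hv => hz v (hFC hv), ?_⟩
  ext u
  constructor
  · intro hu
    have h := hGeq ▸ hu
    exact ⟨hGF hu, h.2⟩
  · rintro ⟨huF, hzu⟩
    rw [hGeq]
    exact ⟨hFC huF, hzu⟩

lemma IsConeFaceOf.trans_fg {k : ℕ} {w : Fin k → E} {G F C : Set E} (hCw : C = fgcone w)
    (hF : IsConeFaceOf F C) (hG : IsConeFaceOf G F) : IsConeFaceOf G C := by
  classical
  obtain ⟨z, hz, hFeq⟩ := hF
  obtain ⟨z', hz', hGeq⟩ := hG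
  have hwC : ∀ i, w i ∈ C := fun i => hCw ▸ mem_fgcone_self w i
  set N : ℝ := 1 + ∑ i, max 0 (-(z' (w i)) / z (w i)) with hN
  have hNi : ∀ i, -(z' (w i)) / z (w i) < N := by
    intro i
    have h1 : max 0 (-(z' (w i)) / z (w i)) ≤ ∑ j, max 0 (-(z' (w j)) / z (w j)) :=
      Finset.single_le_sum (f := fun j => max (0:ℝ) (-(z' (w j)) / z (w j)))
        (fun j _ => le_max_left _ _) (Finset.mem_univ i)
    calc -(z' (w i)) / z (w i) ≤ max 0 (-(z' (w i)) / z (w i)) := le_max_right _ _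
      _ < N := by rw [hN]; linarith
  set ζ : E →ₗ[ℝ] ℝ := N • z + z' with hζ
  have hζapp : ∀ u, ζ u = N * z u + z' u := fun u => by
    simp [hζ, smul_eq_mul]
  have hζw : ∀ i, 0 ≤ ζ (w i) ∧ (0 < z (w i) → 0 < ζ (w i)) := by
    intro i
    have hzwi : 0 ≤ z (w i) := hz _ (hwC i)
    rcases lt_or_eq_of_le hzwi with hpos | hzero
    · have h2 : -(z' (w i)) < N * z (w i) := by
        have := (div_lt_iff₀ hpos).1 (hNi i)
        linarith
      constructor
      · rw [hζapp]; linarith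
      · intro _; rw [hζapp]; linarith
    · have hwF : w i ∈ F := by rw [hFeq]; exact ⟨hwC i, le_of_eq hzero.symm⟩
      constructor
      · rw [hζapp, ← hzero]
        have := hz' _ hwF
        linarith
      · intro hpos; rw [← hzero] at hpos; exact absurd hpos (lt_irrefl 0)
  have hζC : ∀ u ∈ C, 0 ≤ ζ u := by
    intro u hu
    rw [hCw] at hu
    obtain ⟨c, hc, rfl⟩ := hu
    rw [map_sum]
    refine Finset.sum_nonneg fun i _ => ?_
    rw [map_smul, smul_eq_mul]
    exact mul_nonneg (hc i) (hζw i).1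
  refine ⟨ζ, hζC, ?_⟩
  ext u
  constructor
  · intro hu
    have huF : u ∈ F := by rw [hGeq] at hu; exact hu.1
    have huC : u ∈ C := hFeq ▸ huF |>.1
    have hzu : z u = 0 := by
      have h1 := (hFeq ▸ huF).2
      exact le_antisymm h1 (hz u huC)
    have hz'u : z' u ≤ 0 := (hGeq ▸ hu).2
    exact ⟨huC, by rw [hζapp, hzu]; linarith⟩
  · rintro ⟨huC, hζu⟩
    obtain ⟨c, hc, rfl⟩ := hCw ▸ huC
    set x := ∑ i, c i • w i with hx
    have hterms : ∀ i ∈ Finset.univ, 0 ≤ c i * ζ (w i) :=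
      fun i _ => mul_nonneg (hc i) (hζw i).1
    have hζx : ζ x = ∑ i, c i * ζ (w i) := by
      rw [hx, map_sum]
      exact Finset.sum_congr rfl fun i _ => by rw [map_smul, smul_eq_mul]
    have hsum0 : ∑ i, c i * ζ (w i) = 0 :=
      le_antisymm (hζx ▸ hζu) (Finset.sum_nonneg hterms)
    have hzero : ∀ i ∈ Finset.univ, c i * ζ (w i) = 0 :=
      (Finset.sum_eq_zero_iff_of_nonneg hterms).1 hsum0
    have hzx : z x = 0 := by
      have : ∀ i ∈ Finset.univ, c i * z (w i) = 0 := by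
        intro i hi
        rcases lt_or_eq_of_le (hz _ (hwC i)) with hpos | heq
        · have hcz := hzero i hi
          have : c i = 0 := by
            rcases mul_eq_zero.1 hcz with h | h
            · exact h
            · exact absurd h (ne_of_gt ((hζw i).2 hpos))
          rw [this, zero_mul]
        · rw [← heq, mul_zero]
      rw [hx, map_sum, Finset.sum_congr rfl (fun i _ => by rw [map_smul, smul_eq_mul]),
        Finset.sum_eq_zero this]
    have hxF : x ∈ F := by rw [hFeq]; exact ⟨huC, le_of_eq hzx⟩
    have hz'x : z' x ≤ 0 := by
      have := hζapp x
      rw [hzx, mul_zero, zero_add] at this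
      rw [← this]
      exact hζu
    rw [hGeq]
    exact ⟨hxF, hz'x⟩

lemma coneFace_isFaceOf {F C : Set E} (h0 : (0:E) ∈ C) (h : IsConeFaceOf F C) :
    IsFaceOf F C := by
  obtain ⟨z, hz, rfl⟩ := h
  refine ⟨⟨0, h0, by rw [map_zero]⟩, z, ?_⟩
  ext u
  constructor
  · rintro ⟨huC, hzu⟩
    exact ⟨huC, fun v hv => by calc z u ≤ 0 := hzu
                                    _ ≤ z v := hz v hv⟩
  · rintro ⟨huC, hmin⟩
    refine ⟨huC, ?_⟩
    have := hmin 0 h0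
    rwa [map_zero] at this

lemma faceSet_normalize {S : Set E} (h0 : (0:E) ∈ S) (hsmul : ∀ w ∈ S, (2:ℝ) • w ∈ S)
    (x : E →ₗ[ℝ] ℝ) (hne : (faceSet S x).Nonempty) :
    (∀ v ∈ S, 0 ≤ x v) ∧ faceSet S x = {u ∈ S | x u ≤ 0} := by
  obtain ⟨w, hwS, hwmin⟩ := hne
  have h1 : x w ≤ 0 := by
    have := hwmin 0 h0
    rwa [map_zero] at this
  have h2 : 0 ≤ x w := by
    have := hwmin _ (hsmul w hwS)
    rw [map_smul, smul_eq_mul] at this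
    linarith
  have hxw : x w = 0 := le_antisymm h1 h2
  have hnn : ∀ v ∈ S, 0 ≤ x v := fun v hv => hxw ▸ hwmin v hv
  refine ⟨hnn, ?_⟩
  ext u
  constructor
  · rintro ⟨huS, hmin⟩
    exact ⟨huS, by calc x u ≤ x w := hmin w hwS
                        _ = 0 := hxw⟩
  · rintro ⟨huS, hxu⟩
    exact ⟨huS, fun v hv => le_trans hxu (hnn v hv)⟩

lemma hpoly_inter_descr {ι κ : Type*} (f : ι → E →ₗ[ℝ] ℝ) (b : ι → ℝ)
    (g : κ → E →ₗ[ℝ] ℝ) (c : κ → ℝ) :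
    {x : E | ∀ i, f i x ≤ b i} ∩ {x | ∀ j, g j x ≤ c j}
      = {x | ∀ p : ι ⊕ κ, Sum.elim f g p x ≤ Sum.elim b c p} := by
  ext y
  simp only [mem_inter_iff, mem_setOf_eq, Sum.forall, Sum.elim_inl, Sum.elim_inr]

lemma faceSet_descr {ι : Type*} {f : ι → E →ₗ[ℝ] ℝ} {b : ι → ℝ} {S : Set E}
    (hS : S = {x | ∀ i, f i x ≤ b i}) (x : E →ₗ[ℝ] ℝ) {w : E} (hw : w ∈ faceSet S x) :
    faceSet S x = {y | ∀ p : ι ⊕ Unit,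
      Sum.elim f (fun _ => x) p y ≤ Sum.elim b (fun _ => x w) p} := by
  have hface : faceSet S x = S ∩ {y | ∀ _ : Unit, x y ≤ x w} := by
    ext y
    simp only [faceSet, mem_inter_iff, mem_setOf_eq, forall_const]
    constructor
    · rintro ⟨hyS, hmin⟩
      exact ⟨hyS, hmin w hw.1⟩
    · rintro ⟨hyS, hyw⟩
      exact ⟨hyS, fun v hv => le_trans hyw (hw.2 v hv)⟩
  rw [hface, hS, hpoly_inter_descr]

lemma recPoly_faceSet {ι : Type*} {f : ι → E →ₗ[ℝ] ℝ} {b : ι → ℝ} {S : Set E}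
    (hS : S = {x | ∀ i, f i x ≤ b i}) (x : E →ₗ[ℝ] ℝ) {w : E} (hw : w ∈ faceSet S x) :
    recPoly (faceSet S x) = recPoly S ∩ {u | x u ≤ 0} := by
  rw [recPoly_hpoly (faceSet_descr hS x hw) ⟨w, hw⟩, recPoly_hpoly hS ⟨w, hw.1⟩]
  ext u
  simp only [mem_setOf_eq, Sum.forall, Sum.elim_inl, Sum.elim_inr, mem_inter_iff, forall_const]



/-- generic connectivity through a finite closed cover -/
lemma reach_of_connected {α : Type*} [TopologicalSpace α] {X : Set α} (hX : IsConnected X)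
    {ι : Type*} [Finite ι] {C : ι → Set α} (hcl : ∀ i, IsClosed (C i))
    (hsub : ∀ i, C i ⊆ X) (hcov : X ⊆ ⋃ i, C i) {i₀ i₁ : ι}
    (h₀ : (C i₀).Nonempty) (h₁ : (C i₁).Nonempty) :
    Relation.ReflTransGen (fun a b => (C a ∩ C b).Nonempty) i₀ i₁ := by
  classical
  by_contra hnot
  set R : ι → Prop := fun i => Relation.ReflTransGen (fun a b => (C a ∩ C b).Nonempty) i₀ i
    with hR
  set A : Set α := ⋃ i ∈ {i | R i}, C i with hA
  set B : Set α := ⋃ i ∈ {i | ¬ R i}, C i with hB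
  have hAcl : IsClosed A := Set.Finite.isClosed_biUnion (Set.toFinite _) (fun i _ => hcl i)
  have hBcl : IsClosed B := Set.Finite.isClosed_biUnion (Set.toFinite _) (fun i _ => hcl i)
  have hdisj : ∀ x, x ∈ A → x ∈ B → False := by
    intro x hxA hxB
    obtain ⟨i, hiR, hxi⟩ := mem_iUnion₂.1 hxA
    obtain ⟨j, hjR, hxj⟩ := mem_iUnion₂.1 hxB
    exact hjR (Relation.ReflTransGen.tail hiR ⟨x, hxi, hxj⟩)
  have hXAB : X ⊆ A ∪ B := by
    intro x hx
    obtain ⟨i, hxi⟩ := mem_iUnion.1 (hcov hx)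
    by_cases hiR : R i
    · exact Or.inl (mem_iUnion₂.2 ⟨i, hiR, hxi⟩)
    · exact Or.inr (mem_iUnion₂.2 ⟨i, hiR, hxi⟩)
  have hXsub : X ⊆ Bᶜ ∪ Aᶜ := by
    intro x hx
    rcases hXAB hx with h | h
    · exact Or.inl (fun hxB => hdisj x h hxB)
    · exact Or.inr (fun hxA => hdisj x hxA h)
  obtain ⟨a₀, ha₀⟩ := h₀
  obtain ⟨a₁, ha₁⟩ := h₁
  have h1 : (X ∩ Bᶜ).Nonempty := by
    refine ⟨a₀, hsub i₀ ha₀, fun hB' => ?_⟩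
    exact hdisj a₀ (mem_iUnion₂.2 ⟨i₀, Relation.ReflTransGen.refl, ha₀⟩) hB'
  have h2 : (X ∩ Aᶜ).Nonempty := by
    refine ⟨a₁, hsub i₁ ha₁, fun hA' => ?_⟩
    exact hdisj a₁ hA' (mem_iUnion₂.2 ⟨i₁, hnot, ha₁⟩)
  obtain ⟨x, hxX, hxB, hxA⟩ := hX.isPreconnected Bᶜ Aᶜ hBcl.isOpen_compl hAcl.isOpen_compl
    hXsub h1 h2
  rcases hXAB hxX with h | h
  · exact hxA h
  · exact hxB h

/-- convexity of the parameter set along a ray -/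
lemma ray_interval {Δ : Set E} (hΔ : IsPolyhedron Δ) {p u : E} {t₀ t t₁ : ℝ}
    (h0 : p + t₀ • u ∈ Δ) (h1 : p + t₁ • u ∈ Δ) (hle : t₀ ≤ t) (hle' : t ≤ t₁) :
    p + t • u ∈ Δ := by
  obtain ⟨m, f, b, hd⟩ := hΔ
  rcases eq_or_lt_of_le (le_trans hle hle') with heq | hlt
  · rcases eq_or_lt_of_le hle with heq2 | hlt2
    · rwa [← heq2]
    · have : t = t₁ := le_antisymm hle' (by linarith)
      rwa [this]
  · set lam := (t - t₀) / (t₁ - t₀) with hlam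
    have hden : 0 < t₁ - t₀ := by linarith
    have hl0 : 0 ≤ lam := div_nonneg (by linarith) (le_of_lt hden)
    have hl1 : lam ≤ 1 := (div_le_one hden).2 (by linarith)
    have hconv := hpoly_convex f b (hd ▸ h0) (hd ▸ h1)
      (by linarith : (0:ℝ) ≤ 1 - lam) hl0 (by ring)
    have heq : (1 - lam) • (p + t₀ • u) + lam • (p + t₁ • u) = p + t • u := by
      have hlt' : (1 - lam) * t₀ + lam * t₁ = t := by
        have h' : lam * (t₁ - t₀) = t - t₀ := by rw [hlam]; exact div_mul_cancel₀ _ (ne_of_gt hden)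
        linear_combination h'
      rw [smul_add, smul_add, smul_smul, smul_smul, add_add_add_comm, ← add_smul, ← add_smul,
        sub_add_cancel, one_smul, hlt']
    rw [hd]
    rw [heq] at hconv
    exact hconv

/-- the ray eventually stays in a single cell -/
lemma tail_cell {P : Set (Set E)} (hfin : P.Finite)
    (hpoly : ∀ S ∈ P, IsPolyhedron S ∧ S.Nonempty)
    {p u : E} (hray : ∀ t : ℝ, 0 ≤ t → p + t • u ∈ ⋃ S ∈ P, S) :
    ∃ Δ ∈ P, ∃ T : ℝ, 0 ≤ T ∧ ∀ t ≥ T, p + t • u ∈ Δ := by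
  classical
  by_contra hnot
  push_neg at hnot
  have hbdd : ∀ Δ ∈ P, ∃ M : ℝ, ∀ t, 0 ≤ t → p + t • u ∈ Δ → t ≤ M := by
    intro Δ hΔ
    by_contra hub
    push_neg at hub
    obtain ⟨t₀, ht₀0, ht₀mem, _⟩ := hub 0
    obtain ⟨t, htt₀, htnot⟩ := hnot Δ hΔ t₀ ht₀0
    obtain ⟨t₁, _, ht₁mem, ht₁gt⟩ := hub t
    exact htnot (ray_interval (hpoly Δ hΔ).1 ht₀mem ht₁mem htt₀ (le_of_lt ht₁gt))
  choose! M hM using hbdd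
  obtain ⟨M₀, hM₀⟩ := (hfin.image M).bddAbove
  set t := max 0 (M₀ + 1) with ht
  have hmem := hray t (le_max_left _ _)
  obtain ⟨Δ, hΔ, hmemΔ⟩ := mem_iUnion₂.1 hmem
  have h1 : t ≤ M Δ := hM Δ hΔ t (le_max_left _ _) hmemΔ
  have h2 : M Δ ≤ M₀ := hM₀ (mem_image_of_mem M hΔ)
  have h3 : M₀ + 1 ≤ t := le_max_right _ _
  linarith

/-- ray tail membership gives recession direction -/
lemma recPoly_of_tail {ι : Type*} {f : ι → E →ₗ[ℝ] ℝ} {b : ι → ℝ} {S : Set E}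
    (hS : S = {x | ∀ i, f i x ≤ b i}) {p u : E} {T : ℝ}
    (hT : ∀ t ≥ T, p + t • u ∈ S) : u ∈ recPoly S := by
  rw [recPoly_hpoly hS ⟨p + T • u, hT T le_rfl⟩]
  intro i
  by_contra hpos
  push_neg at hpos
  set t := max T ((b i - f i p + 1) / f i u) with htdef
  have hmem := hT t (le_max_left _ _)
  rw [hS, mem_setOf_eq] at hmem
  have h1 := hmem i
  rw [map_add, map_smul, smul_eq_mul] at h1
  have h2 : (b i - f i p + 1) / f i u ≤ t := le_max_right _ _
  have h3 := (div_le_iff₀ hpos).1 h2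
  linarith


/-- description of the set of parameters whose ray-tail lies in `Δ` -/
lemma J_descr {m : ℕ} {f : Fin m → E →ₗ[ℝ] ℝ} {b : Fin m → ℝ} {Δ : Set E}
    (hd : Δ = {x | ∀ i, f i x ≤ b i}) {u : E} (hu : u ∈ recPoly Δ) (hne : Δ.Nonempty)
    (q d : E) :
    {s ∈ Icc (0:ℝ) 1 | ∃ T : ℝ, ∀ t ≥ T, q + s • d + t • u ∈ Δ}
      = Icc (0:ℝ) 1 ∩ ⋂ i, {s : ℝ | f i u = 0 → f i q + s * f i d ≤ b i} := by
  have hfu : ∀ i, f i u ≤ 0 := by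
    rw [recPoly_hpoly hd hne] at hu
    exact hu
  ext s
  constructor
  · rintro ⟨hsI, T, hT⟩
    refine ⟨hsI, mem_iInter.2 fun i => ?_⟩
    intro hfi0
    have hm := hT T le_rfl
    rw [hd, mem_setOf_eq] at hm
    have h1 := hm i
    rw [map_add, map_add, map_smul, map_smul, smul_eq_mul, smul_eq_mul, hfi0, mul_zero] at h1
    linarith
  · rintro ⟨hsI, hI⟩
    refine ⟨hsI, ∑ i, max 0 ((f i q + s * f i d - b i) / (-(f i u))), fun t ht => ?_⟩
    rw [hd, mem_setOf_eq]
    intro i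
    rw [map_add, map_add, map_smul, map_smul, smul_eq_mul, smul_eq_mul]
    rcases lt_or_eq_of_le (hfu i) with hneg | heq
    · have hTi : (f i q + s * f i d - b i) / (-(f i u))
          ≤ ∑ j, max 0 ((f j q + s * f j d - b j) / (-(f j u))) := by
        calc (f i q + s * f i d - b i) / (-(f i u))
            ≤ max 0 ((f i q + s * f i d - b i) / (-(f i u))) := le_max_right _ _
          _ ≤ ∑ j, max 0 ((f j q + s * f j d - b j) / (-(f j u))) :=
            Finset.single_le_sum
              (f := fun j => max (0:ℝ) ((f j q + s * f j d - b j) / (-(f j u))))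
              (fun j _ => le_max_left _ _) (Finset.mem_univ i)
      have h2 : (f i q + s * f i d - b i) / (-(f i u)) ≤ t := le_trans hTi ht
      have h3 := (div_le_iff₀ (by linarith : (0:ℝ) < -(f i u))).1 h2
      linarith
    · have h4 := mem_iInter.1 hI i heq
      rw [heq, mul_zero, add_zero]
      exact h4
  
/-- strip connectivity: the tail cells over a segment are chained in `P_u` -/
lemma strip_connect [FiniteDimensional ℝ E] {P : Set (Set E)} (hfin : P.Finite)
    (hpoly : ∀ S ∈ P, IsPolyhedron S ∧ S.Nonempty)
    {u q q' : E} (hseg : ∀ s ∈ Icc (0:ℝ) 1, q + s • (q' - q) ∈ ⋃ S ∈ P, S)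
    (hu : ∀ p ∈ ⋃ S ∈ P, S, ∀ t : ℝ, 0 ≤ t → p + t • u ∈ ⋃ S ∈ P, S)
    {Δ Δ' : Set E} (hΔ : Δ ∈ P) (hΔ' : Δ' ∈ P)
    (hT0 : ∃ T : ℝ, ∀ t ≥ T, q + t • u ∈ Δ)
    (hT1 : ∃ T : ℝ, ∀ t ≥ T, q' + t • u ∈ Δ') :
    Relation.ReflTransGen
      (fun S T => S ∈ P ∧ T ∈ P ∧ u ∈ recPoly S ∧ u ∈ recPoly T ∧ (S ∩ T).Nonempty) Δ Δ' := by
  classical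
  have : Finite ↥P := hfin.to_subtype
  set d := q' - q with hdd
  set C : ↥P → Set ℝ :=
    fun Θ => {s ∈ Icc (0:ℝ) 1 | ∃ T : ℝ, ∀ t ≥ T, q + s • d + t • u ∈ Θ.1} with hC
  have hcl : ∀ Θ : ↥P, IsClosed (C Θ) := by
    intro Θ
    obtain ⟨m, f, b, hdes⟩ := (hpoly Θ.1 Θ.2).1
    by_cases hrec : u ∈ recPoly Θ.1
    · rw [hC]
      dsimp only
      rw [J_descr hdes hrec (hpoly Θ.1 Θ.2).2 q d]
      refine IsClosed.inter isClosed_Icc (isClosed_iInter fun i => ?_)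
      by_cases h0 : f i u = 0
      · have : {s : ℝ | f i u = 0 → f i q + s * f i d ≤ b i}
            = {s : ℝ | f i q + s * f i d ≤ b i} := by
          ext s; simp [h0]
        rw [this]
        exact isClosed_le (continuous_const.add (continuous_id.mul continuous_const))
          continuous_const
      · have : {s : ℝ | f i u = 0 → f i q + s * f i d ≤ b i} = univ := by
          ext s; simp [h0]
        rw [this]
        exact isClosed_univ
    · have : C Θ = ∅ := by
        rw [eq_empty_iff_forall_notMem]
        rintro s ⟨_, T, hT⟩
        exact hrec (recPoly_of_tail hdes hT)
      rw [this]
      exact isClosed_empty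
  have hsub : ∀ Θ : ↥P, C Θ ⊆ Icc (0:ℝ) 1 := fun Θ s hs => hs.1
  have hcov : Icc (0:ℝ) 1 ⊆ ⋃ Θ : ↥P, C Θ := by
    intro s hs
    have hp : q + s • d ∈ ⋃ S ∈ P, S := hseg s hs
    have hray : ∀ t : ℝ, 0 ≤ t → (q + s • d) + t • u ∈ ⋃ S ∈ P, S :=
      fun t ht => hu _ hp t ht
    obtain ⟨Θ, hΘ, T, _, hT⟩ := tail_cell hfin hpoly hray
    exact mem_iUnion.2 ⟨⟨Θ, hΘ⟩, hs, T, fun t ht => hT t ht⟩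
  have h₀ : (0:ℝ) ∈ C ⟨Δ, hΔ⟩ := by
    obtain ⟨T, hT⟩ := hT0
    exact ⟨⟨le_rfl, zero_le_one⟩, T, fun t ht => by
      have := hT t ht
      rwa [zero_smul, add_zero]⟩
  have h₁ : (1:ℝ) ∈ C ⟨Δ', hΔ'⟩ := by
    obtain ⟨T, hT⟩ := hT1
    refine ⟨⟨zero_le_one, le_rfl⟩, T, fun t ht => ?_⟩
    have := hT t ht
    have heq : q + (1:ℝ) • d + t • u = q' + t • u := by
      rw [one_smul, hdd]
      abel
    rwa [heq]
  have hchain := reach_of_connected (isConnected_Icc zero_le_one) hcl hsub hcov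
    ⟨0, h₀⟩ ⟨1, h₁⟩
  have hmap : ∀ a b : ↥P, (C a ∩ C b).Nonempty →
      (fun S T => S ∈ P ∧ T ∈ P ∧ u ∈ recPoly S ∧ u ∈ recPoly T ∧ (S ∩ T).Nonempty)
        a.1 b.1 := by
    rintro a b ⟨s, ⟨_, Ta, hTa⟩, ⟨_, Tb, hTb⟩⟩
    obtain ⟨ma, fa, ba, hda⟩ := (hpoly a.1 a.2).1
    obtain ⟨mb, fb, bb, hdb⟩ := (hpoly b.1 b.2).1
    refine ⟨a.2, b.2, recPoly_of_tail hda hTa, recPoly_of_tail hdb hTb, ?_⟩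
    exact ⟨q + s • d + max Ta Tb • u,
      hTa _ (le_max_left _ _), hTb _ (le_max_right _ _)⟩
  exact Relation.ReflTransGen.lift (r := fun a b => (C a ∩ C b).Nonempty)
    Subtype.val hmap _ _ hchain

def adjU (P : Set (Set E)) (u : E) : Set E → Set E → Prop :=
  fun S T => S ∈ P ∧ T ∈ P ∧ u ∈ recPoly S ∧ u ∈ recPoly T ∧ (S ∩ T).Nonempty




/-- walk a plain chain, tracking tail cells, to get a `P_u`-chain -/
lemma chain_to_tail [FiniteDimensional ℝ E] {P : Set (Set E)} (hfin : P.Finite)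
    (hpoly : ∀ S ∈ P, IsPolyhedron S ∧ S.Nonempty)
    {u : E} (hu : ∀ p ∈ ⋃ S ∈ P, S, ∀ t : ℝ, 0 ≤ t → p + t • u ∈ ⋃ S ∈ P, S)
    {Λ₁ : Set E} (hΛ₁ : Λ₁ ∈ P) (hu₁ : u ∈ recPoly Λ₁)
    {Θ : Set E}
    (hchain : Relation.ReflTransGen (fun S T => S ∈ P ∧ T ∈ P ∧ (S ∩ T).Nonempty) Λ₁ Θ) :
    ∀ q ∈ Θ, ∀ Δ, Δ ∈ P → (∃ T : ℝ, ∀ t ≥ T, q + t • u ∈ Δ) →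
      Relation.ReflTransGen (adjU P u) Λ₁ Δ := by
  induction hchain with
  | refl =>
    rintro q hq Δ hΔ ⟨T, hT⟩
    obtain ⟨m, f, b, hd⟩ := (hpoly Λ₁ hΛ₁).1
    obtain ⟨m', f', b', hd'⟩ := (hpoly Δ hΔ).1
    refine Relation.ReflTransGen.single ⟨hΛ₁, hΔ, hu₁, recPoly_of_tail hd' hT, ?_⟩
    exact ⟨q + max T 0 • u, hpoly_ray hd hq hu₁ (le_max_right _ _), hT _ (le_max_left _ _)⟩
  | tail hpath hstep ih =>
    rename_i Θb Θc
    rintro q' hq' Δ' hΔ' hT'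
    obtain ⟨hb, hc, q₀, hq₀b, hq₀c⟩ := hstep
    have hq₀supp : q₀ ∈ ⋃ S ∈ P, S := mem_iUnion₂.2 ⟨_, hb, hq₀b⟩
    obtain ⟨Δ₀, hΔ₀, T₀, hT₀0, hT₀⟩ := tail_cell hfin hpoly (fun t ht => hu q₀ hq₀supp t ht)
    have hpath1 := ih q₀ hq₀b Δ₀ hΔ₀ ⟨T₀, hT₀⟩
    obtain ⟨mc, fc, bc, hdc⟩ := (hpoly Θc hc).1
    have hseg : ∀ s ∈ Icc (0:ℝ) 1, q₀ + s • (q' - q₀) ∈ ⋃ S ∈ P, S := by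
      intro s hs
      refine mem_iUnion₂.2 ⟨Θc, hc, ?_⟩
      have hconv := hpoly_convex fc bc (hdc ▸ hq₀c) (hdc ▸ hq')
        (by linarith [hs.2] : (0:ℝ) ≤ 1 - s) hs.1 (by ring)
      have heq : (1 - s) • q₀ + s • q' = q₀ + s • (q' - q₀) := by
        rw [smul_sub, sub_smul, one_smul]
        abel
      rw [hdc]
      rwa [heq] at hconv
    exact hpath1.trans (strip_connect hfin hpoly hseg hu hΔ₀ hΔ' ⟨T₀, hT₀⟩ hT')

/-- any two cells whose recession cones contain `u` are chained in `P_u` -/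
lemma chain_in_Pu [FiniteDimensional ℝ E] {P : Set (Set E)}
    (hconn : IsConnected (⋃ S ∈ P, S)) (hfin : P.Finite)
    (hpoly : ∀ S ∈ P, IsPolyhedron S ∧ S.Nonempty)
    {u : E} (hu : ∀ p ∈ ⋃ S ∈ P, S, ∀ t : ℝ, 0 ≤ t → p + t • u ∈ ⋃ S ∈ P, S)
    {Λ₁ Λ₂ : Set E} (h₁ : Λ₁ ∈ P) (h₂ : Λ₂ ∈ P)
    (hu₁ : u ∈ recPoly Λ₁) (hu₂ : u ∈ recPoly Λ₂) :
    Relation.ReflTransGen (adjU P u) Λ₁ Λ₂ := by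
  classical
  have : Finite ↥P := hfin.to_subtype
  have hplain : Relation.ReflTransGen
      (fun S T => S ∈ P ∧ T ∈ P ∧ (S ∩ T).Nonempty) Λ₁ Λ₂ := by
    have hcl : ∀ Θ : ↥P, IsClosed (Θ.1 : Set E) := fun Θ => by
      obtain ⟨m, f, b, hd⟩ := (hpoly Θ.1 Θ.2).1
      rw [hd]
      exact hpoly_closed f b
    have hsub : ∀ Θ : ↥P, (Θ.1 : Set E) ⊆ ⋃ S ∈ P, S :=
      fun Θ x hx => mem_iUnion₂.2 ⟨Θ.1, Θ.2, hx⟩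
    have hcov : (⋃ S ∈ P, S) ⊆ ⋃ Θ : ↥P, (Θ.1 : Set E) := by
      intro x hx
      obtain ⟨S, hS, hxS⟩ := mem_iUnion₂.1 hx
      exact mem_iUnion.2 ⟨⟨S, hS⟩, hxS⟩
    have hreach := reach_of_connected hconn hcl hsub hcov
      (i₀ := ⟨Λ₁, h₁⟩) (i₁ := ⟨Λ₂, h₂⟩) (hpoly Λ₁ h₁).2 (hpoly Λ₂ h₂).2
    exact Relation.ReflTransGen.lift Subtype.val (fun a b hab => ⟨a.2, b.2, hab⟩) _ _ hreach
  obtain ⟨q, hq⟩ := (hpoly Λ₂ h₂).2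
  have hqsupp : q ∈ ⋃ S ∈ P, S := mem_iUnion₂.2 ⟨Λ₂, h₂, hq⟩
  obtain ⟨Δ, hΔ, T, hT0, hT⟩ := tail_cell hfin hpoly (fun t ht => hu q hqsupp t ht)
  have hpath := chain_to_tail hfin hpoly hu h₁ hu₁ hplain q hq Δ hΔ ⟨T, hT⟩
  obtain ⟨m, f, b, hd⟩ := (hpoly Λ₂ h₂).1
  obtain ⟨m', f', b', hd'⟩ := (hpoly Δ hΔ).1
  refine hpath.tail ⟨hΔ, h₂, recPoly_of_tail hd' hT, hu₂, ?_⟩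
  exact ⟨q + max T 0 • u, hT _ (le_max_left _ _), hpoly_ray hd hq hu₂ (le_max_right _ _)⟩

/-- C4: recession cones of intersecting cells meet in a cone face -/
lemma rec_inter_coneFace {P : Set (Set E)}
    (hpoly : ∀ S ∈ P, IsPolyhedron S ∧ S.Nonempty)
    (hint : ∀ S ∈ P, ∀ T ∈ P, (S ∩ T).Nonempty → IsFaceOf (S ∩ T) S ∧ IsFaceOf (S ∩ T) T)
    {Λ Sg : Set E} (hΛ : Λ ∈ P) (hSg : Sg ∈ P) (hne : (Λ ∩ Sg).Nonempty) :
    IsConeFaceOf (recPoly Λ ∩ recPoly Sg) (recPoly Λ) := by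
  obtain ⟨x, hxeq⟩ := (hint Λ hΛ Sg hSg hne).1.2
  obtain ⟨w, hw⟩ := hne
  have hwface : w ∈ faceSet Λ x := hxeq ▸ hw
  obtain ⟨m, f, b, hΛd⟩ := (hpoly Λ hΛ).1
  obtain ⟨m', g, c, hSgd⟩ := (hpoly Sg hSg).1
  have hid : Λ ∩ Sg = {y | ∀ p : Fin m ⊕ Fin m', Sum.elim f g p y ≤ Sum.elim b c p} := by
    rw [hΛd, hSgd, hpoly_inter_descr]
  have h1 : recPoly (Λ ∩ Sg) = recPoly Λ ∩ recPoly Sg := by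
    rw [recPoly_hpoly hid ⟨w, hw⟩, recPoly_hpoly hΛd ⟨w, hw.1⟩, recPoly_hpoly hSgd ⟨w, hw.2⟩]
    ext v
    simp only [mem_setOf_eq, Sum.forall, Sum.elim_inl, Sum.elim_inr, mem_inter_iff]
  have h2 : recPoly (faceSet Λ x) = recPoly Λ ∩ {v | x v ≤ 0} := recPoly_faceSet hΛd x hwface
  have hxnn : ∀ v ∈ recPoly Λ, 0 ≤ x v := by
    intro v hv
    have hwv : w + v ∈ Λ := hv w hw.1
    have h3 := hwface.2 _ hwv
    rw [map_add] at h3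
    linarith
  refine ⟨x, hxnn, ?_⟩
  rw [← h1, hxeq, h2]
  ext v
  constructor
  · rintro ⟨hv1, hv2⟩
    exact ⟨hv1, hv2⟩
  · rintro ⟨hv1, hv2⟩
    exact ⟨hv1, hv2⟩

lemma recPoly_fg [FiniteDimensional ℝ E] {S : Set E} (hS : IsPolyhedron S)
    (hne : S.Nonempty) : ∃ (k : ℕ) (w : Fin k → E), recPoly S = fgcone w := by
  obtain ⟨m, f, b, hd⟩ := hS
  obtain ⟨k, w, hw⟩ := hcone_fg f
  exact ⟨k, w, by rw [recPoly_hpoly hd hne, hw]⟩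

/-- C5: the main statement, recession cones intersect in common cone faces -/
lemma rec_inter_coneFace_all [FiniteDimensional ℝ E] {P : Set (Set E)}
    (hconn : IsConnected (⋃ S ∈ P, S)) (hfin : P.Finite)
    (hpoly : ∀ S ∈ P, IsPolyhedron S ∧ S.Nonempty)
    (hint : ∀ S ∈ P, ∀ T ∈ P, (S ∩ T).Nonempty → IsFaceOf (S ∩ T) S ∧ IsFaceOf (S ∩ T) T)
    (hMW : ∀ p ∈ ⋃ S ∈ P, S, locRec (⋃ S ∈ P, S) p = recSet (⋃ S ∈ P, S))
    {Λ₁ Λ₂ : Set E} (h₁ : Λ₁ ∈ P) (h₂ : Λ₂ ∈ P) :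
    IsConeFaceOf (recPoly Λ₁ ∩ recPoly Λ₂) (recPoly Λ₁)
      ∧ IsConeFaceOf (recPoly Λ₁ ∩ recPoly Λ₂) (recPoly Λ₂) := by
  classical
  set K := recPoly Λ₁ ∩ recPoly Λ₂ with hK
  obtain ⟨m1, f1, b1, hd1⟩ := (hpoly Λ₁ h₁).1
  obtain ⟨m2, f2, b2, hd2⟩ := (hpoly Λ₂ h₂).1
  obtain ⟨p₁, hp₁⟩ := (hpoly Λ₁ h₁).2
  obtain ⟨p₂, hp₂⟩ := (hpoly Λ₂ h₂).2
  have hr1 : recPoly Λ₁ = {v | ∀ i, f1 i v ≤ 0} := recPoly_hpoly hd1 ⟨p₁, hp₁⟩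
  have hr2 : recPoly Λ₂ = {v | ∀ i, f2 i v ≤ 0} := recPoly_hpoly hd2 ⟨p₂, hp₂⟩
  have hKd : K = {v | ∀ p : Fin m1 ⊕ Fin m2, Sum.elim f1 f2 p v ≤ 0} := by
    rw [hK, hr1, hr2]
    ext v
    simp only [mem_inter_iff, mem_setOf_eq, Sum.forall, Sum.elim_inl, Sum.elim_inr]
  obtain ⟨k, kg, hkg⟩ := hcone_fg (Sum.elim f1 f2)
  have hKfg : K = fgcone kg := by rw [hKd, hkg]
  set u : E := ∑ i, kg i with hudef
  have huK : u ∈ K := by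
    rw [hKfg]
    exact ⟨fun _ => 1, fun _ => zero_le_one, by simp [hudef]⟩
  have hkgK : ∀ i, kg i ∈ K := fun i => hKfg ▸ mem_fgcone_self kg i
  -- u is a global recession direction
  have hp₁supp : p₁ ∈ ⋃ S ∈ P, S := mem_iUnion₂.2 ⟨Λ₁, h₁, hp₁⟩
  have hloc : u ∈ locRec (⋃ S ∈ P, S) p₁ := by
    intro t ht
    exact mem_iUnion₂.2 ⟨Λ₁, h₁, hpoly_ray hd1 hp₁ huK.1 ht⟩
  have hrecset : u ∈ recSet (⋃ S ∈ P, S) := by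
    rw [← hMW p₁ hp₁supp]
    exact hloc
  have hsupp_ray : ∀ p ∈ ⋃ S ∈ P, S, ∀ t : ℝ, 0 ≤ t → p + t • u ∈ ⋃ S ∈ P, S := by
    intro p hp t ht
    have hl : u ∈ locRec (⋃ S ∈ P, S) p := by
      have := mem_iInter₂.1 hrecset p hp
      exact this
    exact hl t ht
  have hchain := chain_in_Pu hconn hfin hpoly hsupp_ray h₁ h₂ huK.1 huK.2
  -- the fgcone representation of recPoly Λ₁
  obtain ⟨kΛ, wΛ, hwΛ⟩ := recPoly_fg ⟨m1, f1, b1, hd1⟩ ⟨p₁, hp₁⟩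
  -- the invariant along the chain
  have main : ∀ {Θ : Set E}, Relation.ReflTransGen (adjU P u) Λ₁ Θ →
      ∃ H : Set E, K ⊆ H ∧ H ⊆ recPoly Θ ∧ H ⊆ recPoly Λ₁ ∧
        IsConeFaceOf H (recPoly Λ₁) ∧ IsConeFaceOf H (recPoly Θ) := by
    intro Θ hch
    induction hch with
    | refl =>
      exact ⟨recPoly Λ₁, fun v hv => hv.1, subset_rfl, subset_rfl,
        IsConeFaceOf.refl _, IsConeFaceOf.refl _⟩
    | tail hpath hstep ih =>
      rename_i Θb Θc
      obtain ⟨H, hKH, hHb, hHΛ, cfHΛ, cfHb⟩ := ih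
      obtain ⟨hbP, hcP, hub, huc, hbc⟩ := hstep
      set F := recPoly Θb ∩ recPoly Θc with hF
      have cfFb : IsConeFaceOf F (recPoly Θb) := rec_inter_coneFace hpoly hint hbP hcP hbc
      have cfFc : IsConeFaceOf F (recPoly Θc) := by
        have := rec_inter_coneFace hpoly hint hcP hbP (by rwa [inter_comm] at hbc)
        rwa [inter_comm (recPoly Θc) (recPoly Θb)] at this
      have hKF : K ⊆ F := by
        obtain ⟨z, hznn, hFeq⟩ := cfFb
        have huF : u ∈ F := ⟨hub, huc⟩
        have hzu : z u ≤ 0 := (hFeq ▸ huF).2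
        have hkgb : ∀ i, kg i ∈ recPoly Θb := fun i => hHb (hKH (hkgK i))
        have hterm : ∀ j ∈ Finset.univ, (0:ℝ) ≤ z (kg j) :=
          fun j _ => hznn _ (hkgb j)
        have hsum : ∑ j, z (kg j) = z u := by
          rw [hudef, map_sum]
        have hall0 : ∀ j ∈ Finset.univ, z (kg j) = 0 :=
          (Finset.sum_eq_zero_iff_of_nonneg hterm).1
            (le_antisymm (hsum ▸ hzu) (Finset.sum_nonneg hterm))
        have hkgF : ∀ i, kg i ∈ F := by
          intro i
          rw [hFeq]
          exact ⟨hkgb i, le_of_eq (hall0 i (Finset.mem_univ i))⟩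
        obtain ⟨mb', fb', bb', hdb'⟩ := (hpoly Θb hbP).1
        obtain ⟨mc', fc', bc', hdc'⟩ := (hpoly Θc hcP).1
        have hrb : recPoly Θb = {v | ∀ i, fb' i v ≤ 0} := recPoly_hpoly hdb' (hpoly Θb hbP).2
        have hrc : recPoly Θc = {v | ∀ i, fc' i v ≤ 0} := recPoly_hpoly hdc' (hpoly Θc hcP).2
        intro x hx
        rw [hKfg] at hx
        constructor
        · rw [hrb]
          refine fgcone_subset_hcone kg fb' (fun i j => ?_) hx
          have h5 := (hkgF i).1
          rw [hrb] at h5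
          exact h5 j
        · rw [hrc]
          refine fgcone_subset_hcone kg fc' (fun i j => ?_) hx
          have h5 := (hkgF i).2
          rw [hrc] at h5
          exact h5 j
      set H' := H ∩ F with hH'
      have cfH'b : IsConeFaceOf H' (recPoly Θb) := cfHb.inter cfFb
      obtain ⟨kc, wc, hwc⟩ := recPoly_fg (hpoly Θc hcP).1 (hpoly Θc hcP).2
      have cfH'Λ : IsConeFaceOf H' (recPoly Λ₁) :=
        IsConeFaceOf.trans_fg hwΛ cfHΛ (cfH'b.shrink inter_subset_left hHb)
      have cfH'c : IsConeFaceOf H' (recPoly Θc) :=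
        IsConeFaceOf.trans_fg hwc cfFc
          (cfH'b.shrink inter_subset_right (hF ▸ inter_subset_left))
      exact ⟨H', subset_inter hKH hKF,
        inter_subset_right.trans (hF ▸ inter_subset_right),
        inter_subset_left.trans hHΛ, cfH'Λ, cfH'c⟩
  obtain ⟨H, hKH, hHΛ₂, hHΛ₁, cfΛ₁, cfΛ₂⟩ := main hchain
  have hHK : H = K := subset_antisymm (subset_inter hHΛ₁ hHΛ₂) hKH
  exact ⟨hHK ▸ cfΛ₁, hHK ▸ cfΛ₂⟩

end BGSAux

/-- Theorem 14(1), complex part: if the support of a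
polyhedral complex `Π` is connected and satisfies the Minkowski-Weyl condition,
then the collection of recession cones of the members of `Π` is a conic
polyhedral complex. -/
theorem statement1 {n : ℕ} (P : Set (Set (Fin n → ℝ))) (hP : IsPolyComplex P)
    (hconn : IsConnected (polySupport P)) (hMW : MWCondition (polySupport P)) :
    IsConicPolyComplex (recComplex P) := by
  obtain ⟨hPne, hPfin, hpoly, hfaces, hint⟩ := hP
  have hconn' : IsConnected (⋃ S ∈ P, S) := hconn
  have hMW' : ∀ p ∈ ⋃ S ∈ P, S, locRec (⋃ S ∈ P, S) p = recSet (⋃ S ∈ P, S) := hMW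
  constructor
  · refine ⟨?_, ?_, ?_, ?_, ?_⟩
    · obtain ⟨Λ, hΛ⟩ := hPne
      exact ⟨recPoly Λ, Λ, hΛ, rfl⟩
    · have himg : recComplex P = (fun Λ => recPoly Λ) '' P := by
        ext C
        constructor
        · rintro ⟨Λ, hΛ, rfl⟩; exact ⟨Λ, hΛ, rfl⟩
        · rintro ⟨Λ, hΛ, rfl⟩; exact ⟨Λ, hΛ, rfl⟩
      rw [himg]
      exact hPfin.image _
    · rintro S ⟨Λ, hΛ, rfl⟩
      obtain ⟨m, f, b, hd⟩ := (hpoly Λ hΛ).1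
      exact ⟨⟨m, f, fun _ => 0, recPoly_hpoly hd (hpoly Λ hΛ).2⟩, 0, zero_mem_recPoly Λ⟩
    · rintro S ⟨Λ, hΛ, rfl⟩ F hF
      obtain ⟨hFne, x, hFeq⟩ := hF
      obtain ⟨m, f, b, hd⟩ := (hpoly Λ hΛ).1
      have hne := (hpoly Λ hΛ).2
      have hrec : recPoly Λ = {u | ∀ i, f i u ≤ 0} := recPoly_hpoly hd hne
      have hsmul : ∀ w ∈ recPoly Λ, (2:ℝ) • w ∈ recPoly Λ := by
        intro w hw
        rw [hrec] at hw ⊢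
        intro i
        rw [map_smul, smul_eq_mul]
        linarith [hw i]
      have hnorm := faceSet_normalize (zero_mem_recPoly Λ) hsmul x (hFeq ▸ hFne)
      have hz : ∀ v, (∀ i, f i v ≤ 0) → 0 ≤ x v := fun v hv =>
        hnorm.1 v (by rw [hrec]; exact hv)
      obtain ⟨w0, hw0Λ, hw0min⟩ := hpoly_min hd hne x hz
      have hwface : w0 ∈ faceSet Λ x := ⟨hw0Λ, hw0min⟩
      refine ⟨faceSet Λ x, hfaces Λ hΛ _ ⟨⟨w0, hwface⟩, x, rfl⟩, ?_⟩
      rw [hFeq, hnorm.2, recPoly_faceSet hd x hwface]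
      ext v
      exact ⟨fun h => ⟨h.1, h.2⟩, fun h => ⟨h.1, h.2⟩⟩
    · rintro S ⟨Λ₁, h₁, rfl⟩ T ⟨Λ₂, h₂, rfl⟩ _
      have hC5 := rec_inter_coneFace_all hconn' hPfin hpoly hint hMW' h₁ h₂
      exact ⟨coneFace_isFaceOf (zero_mem_recPoly _) hC5.1,
        coneFace_isFaceOf (zero_mem_recPoly _) hC5.2⟩
  · rintro S ⟨Λ, hΛ, rfl⟩
    obtain ⟨k, w, hw⟩ := recPoly_fg (hpoly Λ hΛ).1 (hpoly Λ hΛ).2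
    exact isPolyhedralCone_of_eq_fgcone hw
end

section
/- Let Π be a polyhedral complex in ℝⁿ such that the support |Π| is connected and satisfies the Minkowski-Weyl condition (rec_p(|Π|) = rec(|Π|) for all p ∈ |Π|). Then the union of the recession cones of the polyhedra of Π equals the recession cone of the support: ⋃_{Λ∈Π} rec(Λ) = rec(|Π|). -/
open Set Pointwise

variable {E : Type*} [NormedAddCommGroup E] [NormedSpace ℝ E]

private lemma nonpos_of_infinite {a b c : ℝ} {S : Set ℕ} (hS : S.Infinite)
    (h : ∀ k ∈ S, a + (k : ℝ) * c ≤ b) : c ≤ 0 := by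
  by_contra hc
  push_neg at hc
  obtain ⟨N, hN⟩ := exists_nat_gt ((b - a) / c)
  obtain ⟨k, hkS, hk⟩ := hS.exists_gt N
  have h1 : (b - a) / c < (k : ℝ) := lt_trans hN (by exact_mod_cast hk)
  have h2 : b - a < (k : ℝ) * c := (div_lt_iff₀ hc).mp h1
  linarith [h k hkS]

private lemma recPoly_of_infinite {Λ : Set E} (hΛ : IsPolyhedron Λ)
    {p u : E} {S : Set ℕ} (hS : S.Infinite)
    (hmem : ∀ k ∈ S, p + (k : ℝ) • u ∈ Λ) : u ∈ recPoly Λ := by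
  obtain ⟨m, f, b, rfl⟩ := hΛ
  have hfu : ∀ i, f i u ≤ 0 := by
    intro i
    apply nonpos_of_infinite (a := f i p) (b := b i) hS
    intro k hk
    have := hmem k hk i
    rw [map_add, map_smul] at this
    simpa using this
  intro x hx i
  rw [map_add]
  have := hx i
  linarith [hfu i]

private lemma ray_of_recPoly {Λ : Set E} (hΛ : IsPolyhedron Λ) {u : E}
    (hu : u ∈ recPoly Λ) {p : E} (hp : p ∈ Λ) :
    ∀ t : ℝ, 0 ≤ t → p + t • u ∈ Λ := by
  have hnat : ∀ k : ℕ, p + (k : ℝ) • u ∈ Λ := by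
    intro k
    induction k with
    | zero => simpa using hp
    | succ k ih =>
      have h2 := hu _ ih
      have heq : p + ((k + 1 : ℕ) : ℝ) • u = (p + (k : ℝ) • u) + u := by
        push_cast
        rw [add_smul, one_smul]
        abel
      rw [heq]
      exact h2
  obtain ⟨m, f, b, rfl⟩ := hΛ
  have hfu : ∀ i, f i u ≤ 0 := by
    intro i
    apply nonpos_of_infinite (a := f i p) (b := b i) Set.infinite_univ
    intro k _
    have := hnat k i
    rw [map_add, map_smul] at this
    simpa using this
  intro t ht i
  rw [map_add, map_smul, smul_eq_mul]
  have h3 : t * f i u ≤ t * 0 := mul_le_mul_of_nonneg_left (hfu i) ht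
  have hpb := hp i
  simp only [mul_zero] at h3
  linarith

/-- Theorem 14(1), support part: if the support of a
polyhedral complex `Π` is connected and satisfies the Minkowski-Weyl condition,
then `⋃_{Λ ∈ Π} rec(Λ) = rec(|Π|)`. -/
theorem statement2 {n : ℕ} (P : Set (Set (Fin n → ℝ))) (hP : IsPolyComplex P)
    (hconn : IsConnected (polySupport P)) (hMW : MWCondition (polySupport P)) :
    (⋃ Λ ∈ P, recPoly Λ) = recSet (polySupport P) := by
  obtain ⟨hne, hfin, hmem, -, -⟩ := hP
  apply Subset.antisymm
  · intro u hu
    simp only [mem_iUnion, exists_prop] at hu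
    obtain ⟨Λ, hΛ, huΛ⟩ := hu
    obtain ⟨hpoly, hΛne⟩ := hmem Λ hΛ
    obtain ⟨p, hp⟩ := hΛne
    have hps : p ∈ polySupport P := mem_biUnion hΛ hp
    rw [← hMW p hps]
    intro t ht
    exact mem_biUnion hΛ (ray_of_recPoly hpoly huΛ hp t ht)
  · intro u hu
    obtain ⟨Λ0, hΛ0⟩ := hne
    obtain ⟨p, hp⟩ := (hmem Λ0 hΛ0).2
    have hps : p ∈ polySupport P := mem_biUnion hΛ0 hp
    have hray : ∀ t : ℝ, 0 ≤ t → p + t • u ∈ polySupport P := by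
      simp only [recSet, mem_iInter] at hu
      exact hu p hps
    have hinf : ∃ Λ ∈ P, {k : ℕ | p + (k : ℝ) • u ∈ Λ}.Infinite := by
      by_contra h
      push_neg at h
      have hfin' : (⋃ Λ ∈ P, {k : ℕ | p + (k : ℝ) • u ∈ Λ}).Finite :=
        hfin.biUnion h
      apply Set.infinite_univ (α := ℕ)
      apply Set.Finite.subset hfin'
      intro k _
      have hk := hray k (by positivity)
      simp only [polySupport, mem_iUnion, exists_prop] at hk
      obtain ⟨Λ, hΛ, hkΛ⟩ := hk
      exact mem_biUnion hΛ hkΛ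
    obtain ⟨Λ, hΛ, hSinf⟩ := hinf
    exact mem_biUnion hΛ (recPoly_of_infinite (hmem Λ hΛ).1 hSinf fun k hk => hk)
end
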